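/- arXiv:1406.5942 — 8 statements merged into one kernel-verified Lean document; each statement's English description precedes it below -/
import Mathlib

section
/- Let (A, μ, η, δ, ε) be a special commutative Frobenius algebra in a symmetric monoidal category C. Define the iterated multiplication μ⁽ᵐ⁾ : A^{⊗m} ⟶ A by μ⁽⁰⁾ = η, μ⁽¹⁾ = id_A, and μ⁽ᵐ⁺¹⁾ = μ ∘ (μ⁽ᵐ⁾ ⊗ id_A) (composing with the canonical associators), and dually the iterated comultiplication δ⁽ⁿ⁾ : A ⟶ A^{⊗n}. Define the spider S_m^n := δ⁽ⁿ⁾ ∘ μ⁽ᵐ⁾ : A^{⊗m} ⟶ A^{⊗n}. Then for all natural numbers p, r and all q ≥ 1, S_q^r ∘ S_p^q = S_p^r. -/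
open CategoryTheory MonoidalCategory

/-- A special commutative Frobenius algebra (SCFA) in a symmetric monoidal category. -/
structure SCFA (C : Type*) [Category C] [MonoidalCategory C] [SymmetricCategory C] where
  A : C
  mul : A ⊗ A ⟶ A
  unit : 𝟙_ C ⟶ A
  comul : A ⟶ A ⊗ A
  counit : A ⟶ 𝟙_ C
  mul_unit : (A ◁ unit) ≫ mul = (ρ_ A).hom
  mul_assoc : (α_ A A A).hom ≫ (A ◁ mul) ≫ mul = (mul ▷ A) ≫ mul
  mul_comm : (β_ A A).hom ≫ mul = mul
  comul_counit : comul ≫ (A ◁ counit) = (ρ_ A).inv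
  comul_assoc : comul ≫ (comul ▷ A) ≫ (α_ A A A).hom = comul ≫ (A ◁ comul)
  comul_comm : comul ≫ (β_ A A).hom = comul
  frobenius : (comul ▷ A) ≫ (α_ A A A).hom ≫ (A ◁ mul) = mul ≫ comul
  special : comul ≫ mul = 𝟙 A

variable {C : Type*} [Category C] [MonoidalCategory C] [SymmetricCategory C]

/-- The `m`-fold tensor power `A^{⊗ m}` of the underlying object of an SCFA,
associated to the left, with `A^{⊗ 0} = 𝟙_ C` and `A^{⊗ 1} = A`. -/
def SCFA.pow (S : SCFA C) : ℕ → C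
  | 0 => 𝟙_ C
  | 1 => S.A
  | (n + 2) => S.pow (n + 1) ⊗ S.A

/-- The iterated multiplication `μ⁽ᵐ⁾ : A^{⊗ m} ⟶ A`:
`μ⁽⁰⁾ = η`, `μ⁽¹⁾ = id_A` and `μ⁽ᵐ⁺¹⁾ = μ ∘ (μ⁽ᵐ⁾ ⊗ id_A)`. -/
def SCFA.mulPow (S : SCFA C) : (m : ℕ) → (S.pow m ⟶ S.A)
  | 0 => S.unit
  | 1 => 𝟙 S.A
  | (m + 2) => (S.mulPow (m + 1) ▷ S.A) ≫ S.mul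

/-- The iterated comultiplication `δ⁽ⁿ⁾ : A ⟶ A^{⊗ n}`:
`δ⁽⁰⁾ = ε`, `δ⁽¹⁾ = id_A` and `δ⁽ⁿ⁺¹⁾ = (δ⁽ⁿ⁾ ⊗ id_A) ∘ δ`. -/
def SCFA.comulPow (S : SCFA C) : (n : ℕ) → (S.A ⟶ S.pow n)
  | 0 => S.counit
  | 1 => 𝟙 S.A
  | (n + 2) => S.comul ≫ (S.comulPow (n + 1) ▷ S.A)

/-- The spider `S_m^n := δ⁽ⁿ⁾ ∘ μ⁽ᵐ⁾ : A^{⊗ m} ⟶ A^{⊗ n}`. -/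
def SCFA.spider (S : SCFA C) (m n : ℕ) : S.pow m ⟶ S.pow n :=
  S.mulPow m ≫ S.comulPow n

/-- Spiders compose: for all `p, r` and all `q ≥ 1`, `S_q^r ∘ S_p^q = S_p^r`. -/
theorem SCFA.spider_comp (S : SCFA C) (p r : ℕ) (q : ℕ) (hq : 1 ≤ q) :
    S.spider p q ≫ S.spider q r = S.spider p r := by
  have key : ∀ q : ℕ, 1 ≤ q → S.comulPow q ≫ S.mulPow q = 𝟙 S.A := by
    intro q hq
    induction q with
    | zero => omega
    | succ n ih =>
      match n, ih with
      | 0, _ => simp [SCFA.comulPow, SCFA.mulPow]; exact Category.id_comp _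
      | (k + 1), ih =>
        have h := ih (by omega)
        simp only [SCFA.comulPow, SCFA.mulPow, Category.assoc,
          ← comp_whiskerRight_assoc, h, id_whiskerRight, Category.id_comp]
        have e : (S.comul ≫ S.comulPow (k + 1) ▷ S.A) ≫ S.mulPow (k + 1) ▷ S.A ≫ S.mul = 𝟙 S.A := by
          rw [Category.assoc, ← comp_whiskerRight_assoc, h, id_whiskerRight, Category.id_comp]
          exact S.special
        exact e
  simp only [SCFA.spider, Category.assoc]
  rw [← Category.assoc (S.comulPow q), key q hq, Category.id_comp]
end

section
/- Let (A, μ_A, η_A, δ_A, ε_A) and (B, μ_B, η_B, δ_B, ε_B) be special commutative Frobenius algebras in a symmetric monoidal category C, and equip A ⊗ B with the product SCFA: μ_{A⊗B} := (μ_A ⊗ μ_B) ∘ (id_A ⊗ γ_{B,A} ⊗ id_B), η_{A⊗B} := (η_A ⊗ η_B) ∘ λ_𝟙⁻¹, δ_{A⊗B} := (id_A ⊗ γ_{A,B} ⊗ id_B) ∘ (δ_A ⊗ δ_B), ε_{A⊗B} := λ_𝟙 ∘ (ε_A ⊗ ε_B) (inserting the evident associators). Write cap_X := ε_X ∘ μ_X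 for each SCFA. Then the self-dual structures are coherent: (i) cap_{A⊗B} = cap_A ∘ (id_A ⊗ (cap_B ⊗ id_A) ∘ α) ∘ α, i.e. the cap on A ⊗ B equals the nested composite of cap_B inside cap_A (inserting the evident associators); and (ii) cap_A ∘ γ_{A,A} = cap_A. -/
open CategoryTheory MonoidalCategory

variable {C : Type*} [Category C] [MonoidalCategory C] [SymmetricCategory C]

/-- The multiplication of the product SCFA on `A ⊗ B`:
`μ_{A⊗B} = (μ_A ⊗ μ_B) ∘ (id_A ⊗ γ_{B,A} ⊗ id_B)` (inserting the evident associators),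
where the middle-four interchange is `tensorμ`. -/
def prodMul (S T : SCFA C) : (S.A ⊗ T.A) ⊗ (S.A ⊗ T.A) ⟶ S.A ⊗ T.A :=
  tensorμ S.A T.A S.A T.A ≫ (S.mul ⊗ₘ T.mul)

/-- The unit of the product SCFA on `A ⊗ B`: `η_{A⊗B} = (η_A ⊗ η_B) ∘ λ_𝟙⁻¹`. -/
def prodUnit (S T : SCFA C) : 𝟙_ C ⟶ S.A ⊗ T.A :=
  (λ_ (𝟙_ C)).inv ≫ (S.unit ⊗ₘ T.unit)

/-- The comultiplication of the product SCFA on `A ⊗ B`: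
`δ_{A⊗B} = (id_A ⊗ γ_{A,B} ⊗ id_B) ∘ (δ_A ⊗ δ_B)` (inserting the evident associators). -/
def prodComul (S T : SCFA C) : S.A ⊗ T.A ⟶ (S.A ⊗ T.A) ⊗ (S.A ⊗ T.A) :=
  (S.comul ⊗ₘ T.comul) ≫ tensorμ S.A S.A T.A T.A

/-- The counit of the product SCFA on `A ⊗ B`: `ε_{A⊗B} = λ_𝟙 ∘ (ε_A ⊗ ε_B)`. -/
def prodCounit (S T : SCFA C) : S.A ⊗ T.A ⟶ 𝟙_ C :=
  (S.counit ⊗ₘ T.counit) ≫ (λ_ (𝟙_ C)).hom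

/-- The cap `ε ∘ μ` of an SCFA. -/
def SCFA.cap (S : SCFA C) : S.A ⊗ S.A ⟶ 𝟙_ C := S.mul ≫ S.counit

private theorem key_decomp (A B : C) : tensorμ A B A B =
    (α_ A B (A ⊗ B)).hom ≫ (A ◁ (B ◁ (β_ A B).hom)) ≫ (A ◁ (α_ B B A).inv) ≫
      (A ◁ (β_ (B ⊗ B) A).hom) ≫ (α_ A A (B ⊗ B)).inv := by
  rw [tensorμ, BraidedCategory.braiding_tensor_left_hom]
  simp only [← MonoidalCategory.whiskerLeft_comp, ← MonoidalCategory.whiskerLeft_comp_assoc,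
    Category.assoc, Iso.inv_hom_id_assoc, SymmetricCategory.symmetry_assoc]
  simp

private theorem cap_slide {A B : C} (g : B ⊗ B ⟶ 𝟙_ C) :
    (β_ (B ⊗ B) A).hom ≫ (A ◁ g) ≫ (ρ_ A).hom = (g ▷ A) ≫ (λ_ A).hom := by
  rw [← BraidedCategory.braiding_naturality_left_assoc, braiding_rightUnitor]

private theorem cap_aux {A B : C} (f : A ⊗ A ⟶ 𝟙_ C) (g : B ⊗ B ⟶ 𝟙_ C) :
    tensorμ A B A B ≫ (f ⊗ₘ g) ≫ (λ_ (𝟙_ C)).hom =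
      (α_ A B (A ⊗ B)).hom ≫
        (A ◁ ((B ◁ (β_ A B).hom) ≫ (α_ B B A).inv ≫ (g ▷ A) ≫ (λ_ A).hom)) ≫ f := by
  have tail : (A ◁ (β_ (B ⊗ B) A).hom) ≫ (α_ A A (B ⊗ B)).inv ≫ (f ⊗ₘ g) ≫ (λ_ (𝟙_ C)).hom
      = (A ◁ ((g ▷ A) ≫ (λ_ A).hom)) ≫ f := by
    rw [tensorHom_def', unitors_equal]
    slice_lhs 4 5 => rw [MonoidalCategory.rightUnitor_naturality]
    slice_lhs 2 3 => rw [← associator_inv_naturality_right]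
    simp only [rightUnitor_tensor_hom, Iso.inv_hom_id_assoc, Category.assoc]
    simp only [← MonoidalCategory.whiskerLeft_comp_assoc, ← MonoidalCategory.whiskerLeft_comp,
      ← Category.assoc]
    simp only [Category.assoc]
    rw [cap_slide]
  rw [key_decomp]
  simp only [MonoidalCategory.whiskerLeft_comp, Category.assoc]
  rw [tail]
  simp

/-- Coherence of the self-dual structures induced by SCFAs:
(i) the cap of the product SCFA on `A ⊗ B` is the nested composite of `cap_B` inside
`cap_A` (inserting the evident associators and the symmetry needed to nest the wires), and
(ii) `cap_A ∘ γ_{A,A} = cap_A`. -/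
theorem prod_cap_coherence (S T : SCFA C) :
    (prodMul S T ≫ prodCounit S T =
      (α_ S.A T.A (S.A ⊗ T.A)).hom ≫
        (S.A ◁ ((T.A ◁ (β_ S.A T.A).hom) ≫ (α_ T.A T.A S.A).inv ≫
          (T.cap ▷ S.A) ≫ (λ_ S.A).hom)) ≫ S.cap) ∧
    ((β_ S.A S.A).hom ≫ S.cap = S.cap) := by
  constructor
  · have : prodMul S T ≫ prodCounit S T = tensorμ S.A T.A S.A T.A ≫ (S.cap ⊗ₘ T.cap) ≫ (λ_ (𝟙_ C)).hom := by
      simp [prodMul, prodCounit, SCFA.cap, tensorHom_comp_tensorHom]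
    rw [this, cap_aux]
  · conv_lhs => rw [SCFA.cap, ← Category.assoc, S.mul_comm]
    rw [SCFA.cap]
end

section
/- Let Φ = (Φ_b, Φ_d) be a homomorphism of dot-diagrams from F to G, where F and G are simple and closed. If Φ_b is a bijection and the finite sets D^F and D^G have the same cardinality, then Φ_d is also a bijection; that is, Φ is an isomorphism of dot-diagrams. -/
open scoped Classical

/-- A monoidal signature: object labels and morphism labels with domain/codomain arities. -/
structure Signature where
  Obj : Type
  Mor : Type
  dom : Mor → List Obj
  cod : Mor → List Obj

/-- A dot-diagram over a signature `σ`: finite sets of boxes and dots, lists of diagram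
inputs and outputs, labelling functions, and wiring functions sending each box input/output
and each diagram input/output to a dot, subject to the typing conditions. -/
structure DotDiagram (σ : Signature) where
  B : Type
  D : Type
  fB : Fintype B
  fD : Fintype D
  dB : DecidableEq B
  dD : DecidableEq D
  lb : B → σ.Mor
  ld : D → σ.Obj
  nIn : ℕ
  nOut : ℕ
  win : (b : B) → Fin (σ.dom (lb b)).length → D
  wout : (b : B) → Fin (σ.cod (lb b)).length → D
  pin : Fin nIn → D
  pout : Fin nOut → D
  tyIn : ∀ b i, ld (win b i) = (σ.dom (lb b)).get i
  tyOut : ∀ b j, ld (wout b j) = (σ.cod (lb b)).get j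

attribute [instance] DotDiagram.fB DotDiagram.fD DotDiagram.dB DotDiagram.dD

namespace DotDiagram

variable {σ : Signature}

/-- A dot-diagram is closed when it has no diagram inputs or outputs. -/
def Closed (F : DotDiagram σ) : Prop := F.nIn = 0 ∧ F.nOut = 0

/-- A dot-diagram is simple when both wiring functions (on the disjoint union of box
ports and diagram ports) are surjective onto the dots. -/
def Simple (F : DotDiagram σ) : Prop :=
  (∀ d : F.D, (∃ b i, F.win b i = d) ∨ (∃ k, F.pin k = d)) ∧
  (∀ d : F.D, (∃ b j, F.wout b j = d) ∨ (∃ k, F.pout k = d))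

/-- A homomorphism of dot-diagrams: a pair of functions on boxes and dots respecting
the labellings, the wiring functions, and the connections to diagram inputs/outputs. -/
structure Hom (F G : DotDiagram σ) where
  onB : F.B → G.B
  onD : F.D → G.D
  map_lb : ∀ b, G.lb (onB b) = F.lb b
  map_ld : ∀ d, G.ld (onD d) = F.ld d
  map_win : ∀ (b : F.B) (i : Fin (σ.dom (F.lb b)).length),
    G.win (onB b) (Fin.cast (by rw [map_lb b]) i) = onD (F.win b i)
  map_wout : ∀ (b : F.B) (j : Fin (σ.cod (F.lb b)).length),
    G.wout (onB b) (Fin.cast (by rw [map_lb b]) j) = onD (F.wout b j)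
  eq_nIn : F.nIn = G.nIn
  eq_nOut : F.nOut = G.nOut
  map_pin : ∀ k, onD (F.pin k) = G.pin (Fin.cast eq_nIn k)
  map_pout : ∀ k, onD (F.pout k) = G.pout (Fin.cast eq_nOut k)

/-- Two dot-diagrams are isomorphic when there is a homomorphism between them which is
bijective on boxes and on dots. -/
def Isomorphic (F G : DotDiagram σ) : Prop :=
  ∃ Φ : Hom F G, Function.Bijective Φ.onB ∧ Function.Bijective Φ.onD

end DotDiagram

/-- An interpretation of a signature over a commutative semiring `R`: a finite set for each
object label and a tensor of matrix entries for each morphism label. -/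
structure Interp (σ : Signature) (R : Type) [CommSemiring R] where
  car : σ.Obj → Type
  finCar : ∀ A, Fintype (car A)
  val : (f : σ.Mor) →
    ((i : Fin (σ.dom f).length) → car ((σ.dom f).get i)) →
    ((j : Fin (σ.cod f).length) → car ((σ.cod f).get j)) → R

attribute [instance] Interp.finCar

namespace Interp

variable {σ : Signature} {R : Type} [CommSemiring R]

/-- The tensor entry contributed by a box `b` under an assignment `φ` of dots. -/
def boxEntry (M : Interp σ R) (F : DotDiagram σ)
    (φ : (d : F.D) → M.car (F.ld d)) (b : F.B) : R :=
  M.val (F.lb b)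
    (fun i => cast (congrArg M.car (F.tyIn b i)) (φ (F.win b i)))
    (fun j => cast (congrArg M.car (F.tyOut b j)) (φ (F.wout b j)))

/-- The scalar value of a closed dot-diagram: the sum over all assignments of elements to
dots of the product over boxes of the corresponding tensor entries. -/
noncomputable def value (M : Interp σ R) (F : DotDiagram σ) : R :=
  ∑ φ : ((d : F.D) → M.car (F.ld d)), ∏ b : F.B, M.boxEntry F φ b

/-- The value matrix of a dot-diagram: the entry at a boundary assignment `(x; y)` is the
sum over all assignments of elements to dots compatible with the boundary of the product
over boxes of the corresponding tensor entries. -/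
noncomputable def valueMatrix (M : Interp σ R) (F : DotDiagram σ)
    (x : Fin F.nIn → (Σ A : σ.Obj, M.car A))
    (y : Fin F.nOut → (Σ A : σ.Obj, M.car A)) : R :=
  ∑ φ : ((d : F.D) → M.car (F.ld d)),
    if (∀ k, (⟨F.ld (F.pin k), φ (F.pin k)⟩ : Σ A : σ.Obj, M.car A) = x k) ∧
       (∀ l, (⟨F.ld (F.pout l), φ (F.pout l)⟩ : Σ A : σ.Obj, M.car A) = y l)
    then ∏ b : F.B, M.boxEntry F φ b else 0

end Interp

/-- If `Φ` is a homomorphism of simple closed dot-diagrams whose box function is a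
bijection and whose source and target have the same number of dots, then its dot
function is a bijection as well, i.e. `Φ` is an isomorphism of dot-diagrams. -/
theorem DotDiagram.bijective_onD_of_bijective_onB {σ : Signature}
    {F G : DotDiagram σ} (hFs : F.Simple) (hFc : F.Closed) (hGs : G.Simple)
    (hGc : G.Closed) (Φ : DotDiagram.Hom F G)
    (hB : Function.Bijective Φ.onB)
    (hcard : Fintype.card F.D = Fintype.card G.D) :
    Function.Bijective Φ.onD := by
  rw [Fintype.bijective_iff_surjective_and_card]
  refine ⟨?_, hcard⟩
  intro d
  rcases hGs.1 d with ⟨b, i, hbi⟩ | ⟨k, _⟩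
  · obtain ⟨b', rfl⟩ := hB.2 b
    refine ⟨F.win b' (Fin.cast (by rw [Φ.map_lb b']) i), ?_⟩
    rw [← Φ.map_win, ← hbi]
    congr 1
  · have h0 := hGc.1
    have hk := k.isLt
    omega
end

section
/- Let F be a closed (not necessarily simple) dot-diagram over a monoidal signature Σ, let R be a commutative semiring, and for each object label A fix a nonempty finite set M(A) with a distinguished element ✱_A ∈ M(A). Let M be the interpretation that assigns to each morphism label f the tensor whose entry is 1 when every index equals the distinguished element of its set, and 0 otherwise. Then ⟦F⟧_M = ∏_d |M(ℓ_d d)|, where the product ranges over the free dots of F, i.e. the dots d ∈ D^F not in the image of θ_in or θ_out. -/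
open scoped Classical

/-- The `free-dot counting' interpretation: interpret each morphism label by the tensor
which is `1` when all its indices are the distinguished elements and `0` otherwise.  Then
the value of a closed dot-diagram is the product of the cardinalities of the sets
interpreting its free dots (those not in the image of any wiring function). -/
theorem DotDiagram.value_freeDots {σ : Signature} (F : DotDiagram σ)
    (hFc : F.Closed)
    (R : Type) [CommSemiring R] (M : Interp σ R)
    (star : ∀ A : σ.Obj, M.car A)
    (hval : ∀ (f : σ.Mor) x y, M.val f x y =
      if (∀ i, x i = star ((σ.dom f).get i)) ∧ (∀ j, y j = star ((σ.cod f).get j))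
      then 1 else 0) :
    M.value F =
      ∏ d ∈ Finset.univ.filter (fun d : F.D =>
          (¬ ∃ b i, F.win b i = d) ∧ (¬ ∃ b j, F.wout b j = d) ∧
          (¬ ∃ k, F.pin k = d) ∧ (¬ ∃ l, F.pout l = d)),
        (Fintype.card (M.car (F.ld d)) : R) := by
  classical
  obtain ⟨hIn, hOut⟩ := hFc
  set S := Finset.univ.filter (fun d : F.D =>
          (¬ ∃ b i, F.win b i = d) ∧ (¬ ∃ b j, F.wout b j = d) ∧
          (¬ ∃ k, F.pin k = d) ∧ (¬ ∃ l, F.pout l = d)) with hS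
  have castlem : ∀ {A B : σ.Obj} (h : A = B) (x : M.car A),
      cast (congrArg M.car h) x = star B ↔ x = star A := by
    intro A B h x; subst h; simp
  have step1 : M.value F = ∑ φ : ((d : F.D) → M.car (F.ld d)),
      ∏ d : F.D, (if d ∈ S ∨ φ d = star (F.ld d) then (1 : R) else 0) := by
    unfold Interp.value
    refine Finset.sum_congr rfl (fun φ _ => ?_)
    have lhs : ∏ b : F.B, M.boxEntry F φ b =
        if ∀ b : F.B, ((∀ i, cast (congrArg M.car (F.tyIn b i)) (φ (F.win b i))
              = star ((σ.dom (F.lb b)).get i)) ∧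
           (∀ j, cast (congrArg M.car (F.tyOut b j)) (φ (F.wout b j))
              = star ((σ.cod (F.lb b)).get j)))
        then (1 : R) else 0 := by
      simp only [Interp.boxEntry, hval]
      rw [Finset.prod_boole]
      simp
    have rhs : (∏ d : F.D, (if d ∈ S ∨ φ d = star (F.ld d) then (1 : R) else 0)) =
        if ∀ d : F.D, d ∈ S ∨ φ d = star (F.ld d) then (1 : R) else 0 := by
      rw [Finset.prod_boole]; simp
    rw [lhs, rhs]
    congr 1
    apply propext
    constructor
    · intro h d
      by_cases hd : d ∈ S
      · exact Or.inl hd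
      · right
        simp only [hS, Finset.mem_filter, Finset.mem_univ, true_and, not_and_or,
          not_not] at hd
        rcases hd with hd | hd | hd | hd
        · obtain ⟨b, i, rfl⟩ := hd
          have := (h b).1 i
          rw [castlem (F.tyIn b i)] at this
          exact this
        · obtain ⟨b, j, rfl⟩ := hd
          have := (h b).2 j
          rw [castlem (F.tyOut b j)] at this
          exact this
        · obtain ⟨k, _⟩ := hd; exact absurd k.2 (by omega)
        · obtain ⟨l, _⟩ := hd; exact absurd l.2 (by omega)
    · intro h b
      constructor
      · intro i
        rw [castlem (F.tyIn b i)]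
        rcases h (F.win b i) with hd | hd
        · simp only [hS, Finset.mem_filter] at hd
          exact absurd ⟨b, i, rfl⟩ hd.2.1
        · exact hd
      · intro j
        rw [castlem (F.tyOut b j)]
        rcases h (F.wout b j) with hd | hd
        · simp only [hS, Finset.mem_filter] at hd
          exact absurd ⟨b, j, rfl⟩ hd.2.2.1
        · exact hd
  rw [step1, ← Fintype.prod_sum (fun (d : F.D) (x : M.car (F.ld d)) => if d ∈ S ∨ x = star (F.ld d) then (1:R) else 0)]
  have step2 : ∀ d : F.D,
      (∑ x : M.car (F.ld d), if d ∈ S ∨ x = star (F.ld d) then (1 : R) else 0) =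
      if d ∈ S then (Fintype.card (M.car (F.ld d)) : R) else 1 := by
    intro d
    by_cases hd : d ∈ S
    · simp [hd, Finset.card_univ]
    · simp only [hd, false_or, if_false]
      rw [Finset.sum_ite_eq' Finset.univ (star (F.ld d)) (fun _ => (1:R))]
      simp
  calc ∏ d : F.D, (∑ x : M.car (F.ld d), if d ∈ S ∨ x = star (F.ld d) then (1:R) else 0)
      = ∏ d : F.D, (if d ∈ S then (Fintype.card (M.car (F.ld d)) : R) else 1) := by
        exact Finset.prod_congr rfl (fun d _ => step2 d)
    _ = ∏ d ∈ S, (Fintype.card (M.car (F.ld d)) : R) := by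
        rw [Finset.prod_ite_mem Finset.univ S, Finset.univ_inter]
end

section
/- Let F and G be simple closed dot-diagrams over a monoidal signature Σ. Let ℤ[X] be the polynomial ring with one variable X_b for each box b ∈ B^F, and let ⟦−⟧_F be the interpretation of Σ over ℤ[X] defined by: ⟦A⟧_F := ℓ_d^{-1}(A) ⊆ D^F for each object label A, and ⟦f⟧_F := Σ_{b ∈ ℓ_b^{-1}(f)} f_b for each morphism label f, where f_b is the tensor whose entry at indices (x_1,…,x_m; y_1,…,y_n) is X_b if x_i = θ_in^F(b,i) and y_j = θ_out^F(j,b) for all i, j, and 0 otherwise. Then the coefficient of the monomial ∏_{b ∈ B^F} X_b in the scalar ⟦G⟧_F ∈ ℤ[X] equals the number of dot-diagram homomorphisms (ψ, φ) : G → F whose box function ψ : B^G → B^F is a bijection. -/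
open scoped Classical

/-- The interpretation `⟦−⟧_F` over the polynomial ring `ℤ[X_b : b ∈ B^F]` determined by a
dot-diagram `F`: an object label `A` is interpreted by the set of dots of `F` labelled `A`,
and a morphism label `f` by `Σ_{b ∈ ℓ_b⁻¹(f)} f_b`, where `f_b` has entry `X_b` at the
wiring position of the box `b` and `0` elsewhere. -/
noncomputable def DotDiagram.interpF {σ : Signature} (F : DotDiagram σ) :
    Interp σ (MvPolynomial F.B ℤ) where
  car A := {d : F.D // F.ld d = A}
  finCar A := Subtype.fintype _
  val f xs ys :=
    ∑ b : F.B,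
      if h : F.lb b = f then
        (if (∀ i, (xs i).1 = F.win b (Fin.cast (by rw [h]) i)) ∧
            (∀ j, (ys j).1 = F.wout b (Fin.cast (by rw [h]) j))
         then MvPolynomial.X b else 0)
      else 0

namespace DotDiagram

variable {σ : Signature} (F G : DotDiagram σ)

/-- Auxiliary condition: the box `b'` of `F` matches the box `b` of `G` under the dot
assignment `φ`. -/
def CondAt (φ : (d : G.D) → F.interpF.car (G.ld d)) (b' : F.B) (b : G.B) : Prop :=
  ∃ h : F.lb b' = G.lb b,
    (∀ i : Fin (σ.dom (G.lb b)).length,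
        (φ (G.win b i)).1 = F.win b' (Fin.cast (by rw [h]) i)) ∧
    (∀ j : Fin (σ.cod (G.lb b)).length,
        (φ (G.wout b j)).1 = F.wout b' (Fin.cast (by rw [h]) j))

lemma val_cast {A A' : σ.Obj} (hAA : A = A') (e : F.interpF.car A = F.interpF.car A')
    (x : F.interpF.car A) : (cast e x).1 = x.1 := by
  subst hAA
  exact congrArg Subtype.val (eq_of_heq (cast_heq e x))

lemma boxEntry_interpF (φ : (d : G.D) → F.interpF.car (G.ld d)) (b : G.B) :
    F.interpF.boxEntry G φ b
      = ∑ b' : F.B, if CondAt F G φ b' b then MvPolynomial.X b' else 0 := by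
  unfold Interp.boxEntry DotDiagram.interpF
  refine Finset.sum_congr rfl fun b' _ => ?_
  by_cases h : F.lb b' = G.lb b
  · rw [dif_pos h]
    by_cases hc : CondAt F G φ b' b
    · rw [if_pos hc, if_pos ?_]
      obtain ⟨h', h1, h2⟩ := hc
      constructor
      · intro i
        exact (val_cast F (G.tyIn b i) _ _).trans (h1 i)
      · intro j
        exact (val_cast F (G.tyOut b j) _ _).trans (h2 j)
    · rw [if_neg hc, if_neg ?_]
      rintro ⟨h1, h2⟩
      refine hc ⟨h, fun i => ?_, fun j => ?_⟩
      · exact (val_cast F (G.tyIn b i) _ _).symm.trans (h1 i)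
      · exact (val_cast F (G.tyOut b j) _ _).symm.trans (h2 j)
  · rw [dif_neg h, if_neg ?_]
    rintro ⟨h', -⟩
    exact h h'

lemma sum_single_eq_iff (ψ : G.B → F.B) :
    (∑ b : G.B, Finsupp.single (ψ b) 1) = (∑ b' : F.B, Finsupp.single b' (1 : ℕ)) ↔
      Function.Bijective ψ := by
  constructor
  · intro h
    have hcard : ∀ b' : F.B, (Finset.univ.filter fun b => ψ b = b').card = 1 := by
      intro b'
      have hb := DFunLike.congr_fun h b'
      simp only [Finsupp.coe_finset_sum, Finset.sum_apply, Finsupp.single_apply] at hb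
      rw [Finset.sum_ite_eq' Finset.univ b' (fun _ => (1 : ℕ))] at hb
      simp only [Finset.mem_univ, if_true] at hb
      rw [Finset.sum_boole] at hb
      exact_mod_cast hb
    constructor
    · intro a a' haa
      have h1 := hcard (ψ a)
      rw [Finset.card_eq_one] at h1
      obtain ⟨x, hx⟩ := h1
      have ha : a ∈ Finset.univ.filter fun b => ψ b = ψ a := by simp
      have ha' : a' ∈ Finset.univ.filter fun b => ψ b = ψ a := by simp [haa]
      rw [hx, Finset.mem_singleton] at ha ha'
      rw [ha, ha']
    · intro b'
      have h1 := hcard b'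
      have : (Finset.univ.filter fun b => ψ b = b').Nonempty := by
        rw [← Finset.card_pos, h1]; norm_num
      obtain ⟨a, ha⟩ := this
      simp only [Finset.mem_filter] at ha
      exact ⟨a, ha.2⟩
  · intro hb
    exact Fintype.sum_bijective ψ hb _ _ (fun b => rfl)

/-- The equivalence between matching pairs `(φ, ψ)` and homomorphisms bijective on boxes. -/
noncomputable def homEquiv (hFc : F.Closed) (hGc : G.Closed) :
    {p : ((d : G.D) → F.interpF.car (G.ld d)) × (G.B → F.B) //
        (∀ b, CondAt F G p.1 (p.2 b) b) ∧ Function.Bijective p.2}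
      ≃ {Φ : Hom G F // Function.Bijective Φ.onB} where
  toFun p := ⟨{ onB := p.1.2
                onD := fun d => (p.1.1 d).1
                map_lb := fun b => (p.2.1 b).choose
                map_ld := fun d => (p.1.1 d).2
                map_win := fun b i => ((p.2.1 b).choose_spec.1 i).symm
                map_wout := fun b j => ((p.2.1 b).choose_spec.2 j).symm
                eq_nIn := hGc.1.trans hFc.1.symm
                eq_nOut := hGc.2.trans hFc.2.symm
                map_pin := fun k => (Nat.not_lt_zero k.1 (hGc.1 ▸ k.isLt)).elim
                map_pout := fun k => (Nat.not_lt_zero k.1 (hGc.2 ▸ k.isLt)).elim },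
              p.2.2⟩
  invFun Φp := ⟨⟨fun d => ⟨Φp.1.onD d, Φp.1.map_ld d⟩, Φp.1.onB⟩,
    ⟨fun b => ⟨Φp.1.map_lb b, fun i => (Φp.1.map_win b i).symm,
       fun j => (Φp.1.map_wout b j).symm⟩, Φp.2⟩⟩
  left_inv p := rfl
  right_inv Φp := rfl

end DotDiagram

/-- The `magic coefficient': for simple closed dot-diagrams `F` and `G`, the coefficient of
the monomial `∏_{b ∈ B^F} X_b` in the scalar `⟦G⟧_F ∈ ℤ[X]` equals the number of
dot-diagram homomorphisms `G → F` whose box function is a bijection. -/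
theorem DotDiagram.magic_coefficient {σ : Signature} (F G : DotDiagram σ)
    (hFs : F.Simple) (hFc : F.Closed) (hGs : G.Simple) (hGc : G.Closed) :
    MvPolynomial.coeff (∑ b : F.B, Finsupp.single b 1) (F.interpF.value G) =
      (Nat.card {Φ : DotDiagram.Hom G F // Function.Bijective Φ.onB} : ℤ) := by
  classical
  set m : F.B →₀ ℕ := ∑ b : F.B, Finsupp.single b 1 with hm
  have step1 : F.interpF.value G
      = ∑ φ : (d : G.D) → F.interpF.car (G.ld d), ∑ ψ : G.B → F.B,
          if ∀ b, CondAt F G φ (ψ b) b then ∏ b, MvPolynomial.X (ψ b) else 0 := by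
    rw [Interp.value]
    refine Finset.sum_congr rfl fun φ _ => ?_
    calc (∏ b : G.B, F.interpF.boxEntry G φ b)
        = ∏ b : G.B, ∑ b' : F.B, if CondAt F G φ b' b then MvPolynomial.X b' else 0 :=
          Finset.prod_congr rfl fun b _ => boxEntry_interpF F G φ b
      _ = ∑ ψ : G.B → F.B, ∏ b : G.B,
            if CondAt F G φ (ψ b) b then MvPolynomial.X (ψ b) else 0 :=
          Fintype.prod_sum _
      _ = ∑ ψ : G.B → F.B,
            if ∀ b, CondAt F G φ (ψ b) b then ∏ b, MvPolynomial.X (ψ b) else 0 :=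
          Finset.sum_congr rfl fun ψ _ => Fintype.prod_ite_zero
  have step2 : ∀ (φ : (d : G.D) → F.interpF.car (G.ld d)) (ψ : G.B → F.B),
      MvPolynomial.coeff m
        (if ∀ b, CondAt F G φ (ψ b) b then ∏ b, MvPolynomial.X (ψ b) else 0)
      = if (∀ b, CondAt F G φ (ψ b) b) ∧ Function.Bijective ψ then (1 : ℤ) else 0 := by
    intro φ ψ
    rw [apply_ite (MvPolynomial.coeff m), MvPolynomial.coeff_zero]
    have hprod : (∏ b : G.B, (MvPolynomial.X (ψ b) : MvPolynomial F.B ℤ))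
        = MvPolynomial.monomial (∑ b : G.B, Finsupp.single (ψ b) 1) 1 := by
      rw [MvPolynomial.monomial_sum_one]
      rfl
    rw [hprod, MvPolynomial.coeff_monomial]
    by_cases hC : ∀ b, CondAt F G φ (ψ b) b
    · rw [if_pos hC]
      by_cases hB : Function.Bijective ψ
      · rw [if_pos ((sum_single_eq_iff F G ψ).mpr hB), if_pos ⟨hC, hB⟩]
      · rw [if_neg (fun h => hB ((sum_single_eq_iff F G ψ).mp h)),
          if_neg (fun h : _ ∧ _ => hB h.2)]
    · rw [if_neg hC, if_neg (fun h : _ ∧ _ => hC h.1)]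
  rw [step1, MvPolynomial.coeff_sum]
  simp only [MvPolynomial.coeff_sum, step2]
  trans (∑ p : ((d : G.D) → F.interpF.car (G.ld d)) × (G.B → F.B),
      if (∀ b, CondAt F G p.1 (p.2 b) b) ∧ Function.Bijective p.2 then (1 : ℤ) else 0)
  · exact (Fintype.sum_prod_type (f := fun p : ((d : G.D) → F.interpF.car (G.ld d)) × (G.B → F.B) =>
      if (∀ b, CondAt F G p.1 (p.2 b) b) ∧ Function.Bijective p.2 then (1 : ℤ) else 0)).symm
  rw [Finset.sum_boole, ← Fintype.card_subtype, ← Nat.card_eq_fintype_card]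
  exact congrArg _ (Nat.card_congr (homEquiv F G hFc hGc))
end

section
/- Let K be a field of characteristic 0 and Σ a monoidal signature. Two simple closed dot-diagrams F and G over Σ are isomorphic if and only if for every interpretation M of Σ over K, the values ⟦F⟧_M and ⟦G⟧_M in K are equal. -/
open scoped Classical

section Auxiliary

open DotDiagram Interp

variable {σ : Signature}

theorem DotDiagram.Hom.ext' {F G : DotDiagram σ} {Φ Ψ : DotDiagram.Hom F G}
    (h1 : Φ.onB = Ψ.onB) (h2 : Φ.onD = Ψ.onD) : Φ = Ψ := by
  cases Φ; cases Ψ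
  cases h1; cases h2
  rfl

instance homFinite (F G : DotDiagram σ) : Finite (DotDiagram.Hom F G) :=
  Finite.of_injective (fun Φ => (Φ.onB, Φ.onD))
    (fun Φ Ψ h => DotDiagram.Hom.ext' (congrArg Prod.fst h) (congrArg Prod.snd h))

noncomputable instance homFintype (F G : DotDiagram σ) : Fintype (DotDiagram.Hom F G) :=
  Fintype.ofFinite _

theorem cast_subtype_fst {D : Type} {ld : D → σ.Obj} {A A' : σ.Obj} (h : A = A')
    (hh : {d : D // ld d = A} = {d : D // ld d = A'}) (x : {d : D // ld d = A}) :
    (cast hh x).1 = x.1 := by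
  subst h
  exact congrArg Subtype.val (eq_of_heq (cast_heq _ _))

theorem Interp.val_heq {R : Type} [CommSemiring R] (M : Interp σ R) {f g : σ.Mor} (h : f = g)
    {v : (i : Fin (σ.dom f).length) → M.car ((σ.dom f).get i)}
    {w : (j : Fin (σ.cod f).length) → M.car ((σ.cod f).get j)}
    {v' : (i : Fin (σ.dom g).length) → M.car ((σ.dom g).get i)}
    {w' : (j : Fin (σ.cod g).length) → M.car ((σ.cod g).get j)}
    (hv : HEq v v') (hw : HEq w w') : M.val f v w = M.val g v' w' := by
  subst h; rw [eq_of_heq hv, eq_of_heq hw]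

theorem fin_cast_of_heq {n n' : ℕ} (h : n = n') {i : Fin n} {i' : Fin n'} (hh : HEq i i') :
    i' = Fin.cast h i := by
  subst h
  exact Fin.ext (congrArg Fin.val (eq_of_heq hh)).symm

/-- Forward direction: isomorphic diagrams have equal values. -/
theorem value_eq_of_iso {K : Type} [Field K] {F G : DotDiagram σ}
    (h : DotDiagram.Isomorphic F G) (M : Interp σ K) : M.value F = M.value G := by
  obtain ⟨Φ, hB, hD⟩ := h
  let eB : F.B ≃ G.B := Equiv.ofBijective _ hB
  let eD : F.D ≃ G.D := Equiv.ofBijective _ hD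
  have hcl : ∀ d' : G.D, F.ld (eD.symm d') = G.ld d' := fun d' =>
    (Φ.map_ld (eD.symm d')).symm.trans (congrArg G.ld (eD.apply_symm_apply d'))
  let e : ((d : G.D) → M.car (G.ld d)) ≃ ((d : F.D) → M.car (F.ld d)) :=
    { toFun := fun ψ d => cast (congrArg M.car (Φ.map_ld d)) (ψ (Φ.onD d))
      invFun := fun φ d' => cast (congrArg M.car (hcl d')) (φ (eD.symm d'))
      left_inv := by
        intro ψ; funext d'
        refine eq_of_heq (((cast_heq _ _).trans (cast_heq _ _)).trans ?_)
        rw [show Φ.onD (eD.symm d') = d' from eD.apply_symm_apply d']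
      right_inv := by
        intro φ; funext d
        refine eq_of_heq (((cast_heq _ _).trans (cast_heq _ _)).trans ?_)
        rw [show eD.symm (Φ.onD d) = d from eD.symm_apply_apply d] }
  have hbox : ∀ (ψ : (d : G.D) → M.car (G.ld d)) (b : F.B),
      M.boxEntry F (e ψ) b = M.boxEntry G ψ (Φ.onB b) := by
    intro ψ b
    refine M.val_heq (Φ.map_lb b).symm ?_ ?_
    · refine Function.hfunext (by rw [Φ.map_lb b]) ?_
      intro i i' hi
      refine ((cast_heq _ _).trans ?_).trans (cast_heq _ _).symm
      show HEq (cast (congrArg M.car (Φ.map_ld (F.win b i))) (ψ (Φ.onD (F.win b i))))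
        (ψ (G.win (Φ.onB b) i'))
      refine (cast_heq _ _).trans ?_
      have hlen : (σ.dom (F.lb b)).length = (σ.dom (G.lb (Φ.onB b))).length := by
        rw [Φ.map_lb b]
      have hi' : i' = Fin.cast hlen i := fin_cast_of_heq hlen hi
      have hwin : G.win (Φ.onB b) i' = Φ.onD (F.win b i) := by
        rw [hi']; exact Φ.map_win b i
      rw [hwin]
    · refine Function.hfunext (by rw [Φ.map_lb b]) ?_
      intro j j' hj
      refine ((cast_heq _ _).trans ?_).trans (cast_heq _ _).symm
      show HEq (cast (congrArg M.car (Φ.map_ld (F.wout b j))) (ψ (Φ.onD (F.wout b j))))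
        (ψ (G.wout (Φ.onB b) j'))
      refine (cast_heq _ _).trans ?_
      have hlen : (σ.cod (F.lb b)).length = (σ.cod (G.lb (Φ.onB b))).length := by
        rw [Φ.map_lb b]
      have hj' : j' = Fin.cast hlen j := fin_cast_of_heq hlen hj
      have hwout : G.wout (Φ.onB b) j' = Φ.onD (F.wout b j) := by
        rw [hj']; exact Φ.map_wout b j
      rw [hwout]
  calc M.value F
      = ∑ ψ : (d : G.D) → M.car (G.ld d), ∏ b : F.B, M.boxEntry F (e ψ) b :=
        (Equiv.sum_comp e fun φ => ∏ b : F.B, M.boxEntry F φ b).symm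
    _ = M.value G := by
        refine Finset.sum_congr rfl fun ψ _ => ?_
        rw [← Equiv.prod_comp eB fun b' => M.boxEntry G ψ b']
        exact Finset.prod_congr rfl fun b _ => hbox ψ b

/-- The counting interpretation attached to a target diagram `H` and predicates on its
boxes and dots. -/
noncomputable def cntI (K : Type) [Field K] (H : DotDiagram σ)
    (PB : H.B → Prop) (PD : H.D → Prop) : Interp σ K where
  car A := {d : H.D // H.ld d = A}
  finCar A := Subtype.fintype _
  val f v w := (Nat.card {b' : H.B // H.lb b' = f ∧ PB b' ∧
    (∀ (i : ℕ) (h1 : i < (σ.dom f).length) (h2 : i < (σ.dom (H.lb b')).length),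
      (v ⟨i, h1⟩).1 = H.win b' ⟨i, h2⟩) ∧
    (∀ (j : ℕ) (h1 : j < (σ.cod f).length) (h2 : j < (σ.cod (H.lb b')).length),
      (w ⟨j, h1⟩).1 = H.wout b' ⟨j, h2⟩) ∧
    (∀ i, PD (H.win b' i)) ∧ (∀ j, PD (H.wout b' j))} : K)

/-- The type of boxes of `H` compatible with box `b` of `F` under a dot assignment `φ`. -/
abbrev TB (H : DotDiagram σ) (PB : H.B → Prop) (PD : H.D → Prop) (F : DotDiagram σ)
    (φ : (d : F.D) → {d' : H.D // H.ld d' = F.ld d}) (b : F.B) : Type :=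
  {b' : H.B // H.lb b' = F.lb b ∧ PB b' ∧
    (∀ (i : ℕ) (h1 : i < (σ.dom (F.lb b)).length) (h2 : i < (σ.dom (H.lb b')).length),
      (φ (F.win b ⟨i, h1⟩)).1 = H.win b' ⟨i, h2⟩) ∧
    (∀ (j : ℕ) (h1 : j < (σ.cod (F.lb b)).length) (h2 : j < (σ.cod (H.lb b')).length),
      (φ (F.wout b ⟨j, h1⟩)).1 = H.wout b' ⟨j, h2⟩) ∧
    (∀ i, PD (H.win b' i)) ∧ (∀ j, PD (H.wout b' j))}

theorem cntI_boxEntry (K : Type) [Field K] (H : DotDiagram σ)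
    (PB : H.B → Prop) (PD : H.D → Prop) (F : DotDiagram σ)
    (φ : (d : F.D) → (cntI K H PB PD).car (F.ld d)) (b : F.B) :
    (cntI K H PB PD).boxEntry F φ b = (Nat.card (TB H PB PD F φ b) : K) := by
  have hc : ∀ (i : ℕ) (h1 : i < (σ.dom (F.lb b)).length),
      (cast (congrArg (cntI K H PB PD).car (F.tyIn b ⟨i, h1⟩)) (φ (F.win b ⟨i, h1⟩))).1
        = (φ (F.win b ⟨i, h1⟩)).1 := fun i h1 => cast_subtype_fst (F.tyIn b ⟨i, h1⟩) _ _
  have hc' : ∀ (j : ℕ) (h1 : j < (σ.cod (F.lb b)).length),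
      (cast (congrArg (cntI K H PB PD).car (F.tyOut b ⟨j, h1⟩)) (φ (F.wout b ⟨j, h1⟩))).1
        = (φ (F.wout b ⟨j, h1⟩)).1 := fun j h1 => cast_subtype_fst (F.tyOut b ⟨j, h1⟩) _ _
  show (Nat.card _ : K) = _
  congr 1
  refine Nat.card_congr (Equiv.subtypeEquivRight fun b' => ?_)
  simp only [hc, hc']

/-- Build a homomorphism from an assignment-plus-compatible-boxes datum. -/
noncomputable def homOfData {F H : DotDiagram σ} {PB : H.B → Prop} {PD : H.D → Prop}
    (hFc : F.Closed) (hHc : H.Closed)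
    (φ : (d : F.D) → {d' : H.D // H.ld d' = F.ld d})
    (s : ∀ b, TB H PB PD F φ b) : DotDiagram.Hom F H where
  onB b := (s b).1
  onD d := (φ d).1
  map_lb b := (s b).2.1
  map_ld d := (φ d).2
  map_win b i := ((s b).2.2.2.1 i.1 i.2 (by rw [(s b).2.1]; exact i.2)).symm
  map_wout b j := ((s b).2.2.2.2.1 j.1 j.2 (by rw [(s b).2.1]; exact j.2)).symm
  eq_nIn := hFc.1.trans hHc.1.symm
  eq_nOut := hFc.2.trans hHc.2.symm
  map_pin k := (Fin.cast hFc.1 k).elim0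
  map_pout k := (Fin.cast hFc.2 k).elim0

/-- The key bijection: homomorphisms (with constraints) correspond to assignment data. -/
noncomputable def homEquiv (F H : DotDiagram σ) (hFs : F.Simple) (hFc : F.Closed)
    (hHc : H.Closed) (PB : H.B → Prop) (PD : H.D → Prop) :
    {Φ : DotDiagram.Hom F H // (∀ b, PB (Φ.onB b)) ∧ ∀ d, PD (Φ.onD d)} ≃
      Σ φ : (d : F.D) → {d' : H.D // H.ld d' = F.ld d}, ∀ b, TB H PB PD F φ b where
  toFun x :=
    ⟨fun d => ⟨x.1.onD d, x.1.map_ld d⟩, fun b =>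
      ⟨x.1.onB b, x.1.map_lb b, x.2.1 b,
        fun i h1 _ => (x.1.map_win b ⟨i, h1⟩).symm,
        fun j h1 _ => (x.1.map_wout b ⟨j, h1⟩).symm,
        fun i => by
          have h2 : H.win (x.1.onB b) i
              = x.1.onD (F.win b (Fin.cast (by rw [x.1.map_lb b]) i)) :=
            x.1.map_win b (Fin.cast (by rw [x.1.map_lb b]) i)
          rw [h2]; exact x.2.2 _,
        fun j => by
          have h2 : H.wout (x.1.onB b) j
              = x.1.onD (F.wout b (Fin.cast (by rw [x.1.map_lb b]) j)) :=
            x.1.map_wout b (Fin.cast (by rw [x.1.map_lb b]) j)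
          rw [h2]; exact x.2.2 _⟩⟩
  invFun y :=
    ⟨homOfData hFc hHc y.1 y.2, fun b => (y.2 b).2.2.1, fun d => by
      show PD ((y.1 d).1)
      rcases hFs.1 d with ⟨b, i, hd⟩ | ⟨k, hk⟩
      · subst hd
        have h2 : i.1 < (σ.dom (H.lb (y.2 b).1)).length := by
          rw [(y.2 b).2.1]; exact i.2
        rw [show ((y.1 (F.win b i)).1 : H.D) = H.win (y.2 b).1 ⟨i.1, h2⟩ from
          (y.2 b).2.2.2.1 i.1 i.2 h2]
        exact (y.2 b).2.2.2.2.2.1 ⟨i.1, h2⟩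
      · exact (Fin.cast hFc.1 k).elim0⟩
  left_inv x := rfl
  right_inv y := rfl

theorem card_subtype_cast {K : Type} [Field K] {α : Type} [Fintype α] (p : α → Prop) :
    (Nat.card {x // p x} : K) = ∑ x : α, if p x then (1 : K) else 0 := by
  classical
  rw [Nat.card_eq_fintype_card, Fintype.card_subtype, Finset.card_filter]
  push_cast
  exact Finset.sum_congr rfl fun x _ => by split_ifs <;> simp

theorem value_cntI (K : Type) [Field K] (F H : DotDiagram σ)
    (hFs : F.Simple) (hFc : F.Closed) (hHc : H.Closed)
    (PB : H.B → Prop) (PD : H.D → Prop) :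
    (cntI K H PB PD).value F
      = (Nat.card {Φ : DotDiagram.Hom F H // (∀ b, PB (Φ.onB b)) ∧ ∀ d, PD (Φ.onD d)} : K) := by
  have h1 : (cntI K H PB PD).value F
      = ∑ φ : (d : F.D) → (cntI K H PB PD).car (F.ld d), ∏ b : F.B,
          (Nat.card (TB H PB PD F φ b) : K) :=
    Finset.sum_congr rfl fun φ _ => Finset.prod_congr rfl fun b _ =>
      cntI_boxEntry K H PB PD F φ b
  have hNat : Nat.card {Φ : DotDiagram.Hom F H // (∀ b, PB (Φ.onB b)) ∧ ∀ d, PD (Φ.onD d)}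
      = ∑ φ : (d : F.D) → (cntI K H PB PD).car (F.ld d), ∏ b : F.B,
          Nat.card (TB H PB PD F φ b) := by
    rw [Nat.card_congr (homEquiv F H hFs hFc hHc PB PD), Nat.card_eq_fintype_card,
      Fintype.card_sigma]
    exact Finset.sum_congr rfl fun φ _ => by
      rw [Fintype.card_pi]
      exact Finset.prod_congr rfl fun b _ => Nat.card_eq_fintype_card.symm
  rw [h1, hNat]
  push_cast
  rfl

theorem ie_aux {K : Type} [Field K] {β γ : Type} [Fintype β] [DecidableEq β] [Fintype γ]
    (g : γ → β) :
    ∑ S : Finset β, (-1 : K) ^ Sᶜ.card * (if ∀ x, g x ∈ S then 1 else 0)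
      = if Function.Surjective g then 1 else 0 := by
  classical
  have hinv : Function.Involutive (fun S : Finset β => Sᶜ) := fun S => compl_compl S
  rw [← Equiv.sum_comp hinv.toPerm
    (fun S : Finset β => (-1 : K) ^ Sᶜ.card * (if ∀ x, g x ∈ S then 1 else 0))]
  simp only [Function.Involutive.coe_toPerm, compl_compl]
  have hsub : ∀ S : Finset β, (∀ x, g x ∈ Sᶜ) ↔ S ⊆ (Finset.univ.image g)ᶜ := by
    intro S
    constructor
    · intro h a ha
      rw [Finset.mem_compl]
      intro hmem
      obtain ⟨x, -, rfl⟩ := Finset.mem_image.1 hmem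
      exact (Finset.mem_compl.1 (h x)) ha
    · intro h x
      rw [Finset.mem_compl]
      intro hx
      have := h hx
      rw [Finset.mem_compl] at this
      exact this (Finset.mem_image.2 ⟨x, Finset.mem_univ x, rfl⟩)
  simp only [hsub, mul_ite, mul_one, mul_zero]
  rw [← Finset.sum_filter]
  have hpow : Finset.univ.filter (· ⊆ (Finset.univ.image g)ᶜ)
      = ((Finset.univ.image g)ᶜ).powerset := by
    ext S; simp [Finset.mem_powerset]
  rw [hpow]
  have hcast : (∑ S ∈ ((Finset.univ.image g)ᶜ).powerset, (-1 : K) ^ S.card)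
      = ((∑ S ∈ ((Finset.univ.image g)ᶜ).powerset, (-1 : ℤ) ^ S.card : ℤ) : K) := by
    push_cast; rfl
  rw [hcast, Finset.sum_powerset_neg_one_pow_card]
  have hT : (Finset.univ.image g)ᶜ = ∅ ↔ Function.Surjective g := by
    rw [Finset.compl_eq_empty_iff, Finset.eq_univ_iff_forall]
    constructor
    · intro h b
      obtain ⟨x, -, hx⟩ := Finset.mem_image.1 (h b)
      exact ⟨x, hx⟩
    · intro h b
      obtain ⟨x, hx⟩ := h b
      exact Finset.mem_image.2 ⟨x, Finset.mem_univ x, hx⟩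
  split_ifs with h1 h2 h3 <;> simp_all

/-- The identity homomorphism. -/
def idHom (F : DotDiagram σ) : DotDiagram.Hom F F where
  onB := id
  onD := id
  map_lb _ := rfl
  map_ld _ := rfl
  map_win _ _ := rfl
  map_wout _ _ := rfl
  eq_nIn := rfl
  eq_nOut := rfl
  map_pin _ := rfl
  map_pout _ := rfl

end Auxiliary

set_option maxHeartbeats 1600000 in
/-- Completeness for simple closed dot-diagrams: over a field `K` of characteristic `0`,
two simple closed dot-diagrams are isomorphic iff their values agree under every
interpretation of the signature over `K`. -/
theorem DotDiagram.completeness_simple_closed {σ : Signature}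
    (K : Type) [Field K] [CharZero K] (F G : DotDiagram σ)
    (hFs : F.Simple) (hFc : F.Closed) (hGs : G.Simple) (hGc : G.Closed) :
    DotDiagram.Isomorphic F G ↔ ∀ M : Interp σ K, M.value F = M.value G := by
  constructor
  · exact fun h M => value_eq_of_iso h M
  · intro hv
    -- key counting identity
    have main : ∀ (X H : DotDiagram σ), X.Simple → X.Closed → H.Closed →
        (Nat.card {Φ : DotDiagram.Hom X H //
            Function.Surjective Φ.onB ∧ Function.Surjective Φ.onD} : K)
          = ∑ B₀ : Finset H.B, ∑ D₀ : Finset H.D,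
              (-1 : K) ^ (B₀ᶜ.card + D₀ᶜ.card) * (cntI K H (· ∈ B₀) (· ∈ D₀)).value X := by
      intro X H hXs hXc hHc
      symm
      calc ∑ B₀ : Finset H.B, ∑ D₀ : Finset H.D,
              (-1 : K) ^ (B₀ᶜ.card + D₀ᶜ.card) * (cntI K H (· ∈ B₀) (· ∈ D₀)).value X
          = ∑ B₀ : Finset H.B, ∑ D₀ : Finset H.D, ∑ Φ : DotDiagram.Hom X H,
              ((-1 : K) ^ B₀ᶜ.card * (if ∀ b, Φ.onB b ∈ B₀ then 1 else 0))
                * ((-1 : K) ^ D₀ᶜ.card * (if ∀ d, Φ.onD d ∈ D₀ then 1 else 0)) := by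
            refine Finset.sum_congr rfl fun B₀ _ => Finset.sum_congr rfl fun D₀ _ => ?_
            rw [value_cntI K X H hXs hXc hHc, card_subtype_cast, Finset.mul_sum]
            refine Finset.sum_congr rfl fun Φ _ => ?_
            by_cases hP : ∀ b, Φ.onB b ∈ B₀ <;> by_cases hQ : ∀ d, Φ.onD d ∈ D₀ <;>
              simp [hP, hQ, pow_add] <;> ring
        _ = ∑ Φ : DotDiagram.Hom X H,
              (∑ B₀ : Finset H.B, (-1 : K) ^ B₀ᶜ.card * (if ∀ b, Φ.onB b ∈ B₀ then 1 else 0))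
                * (∑ D₀ : Finset H.D,
                    (-1 : K) ^ D₀ᶜ.card * (if ∀ d, Φ.onD d ∈ D₀ then 1 else 0)) := by
            calc ∑ B₀ : Finset H.B, ∑ D₀ : Finset H.D, ∑ Φ : DotDiagram.Hom X H,
                  ((-1 : K) ^ B₀ᶜ.card * (if ∀ b, Φ.onB b ∈ B₀ then 1 else 0))
                    * ((-1 : K) ^ D₀ᶜ.card * (if ∀ d, Φ.onD d ∈ D₀ then 1 else 0))
                = ∑ B₀ : Finset H.B, ∑ Φ : DotDiagram.Hom X H, ∑ D₀ : Finset H.D,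
                  ((-1 : K) ^ B₀ᶜ.card * (if ∀ b, Φ.onB b ∈ B₀ then 1 else 0))
                    * ((-1 : K) ^ D₀ᶜ.card * (if ∀ d, Φ.onD d ∈ D₀ then 1 else 0)) :=
                  Finset.sum_congr rfl fun B₀ _ => Finset.sum_comm
              _ = ∑ Φ : DotDiagram.Hom X H, ∑ B₀ : Finset H.B, ∑ D₀ : Finset H.D,
                  ((-1 : K) ^ B₀ᶜ.card * (if ∀ b, Φ.onB b ∈ B₀ then 1 else 0))
                    * ((-1 : K) ^ D₀ᶜ.card * (if ∀ d, Φ.onD d ∈ D₀ then 1 else 0)) :=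
                  Finset.sum_comm
              _ = _ := Finset.sum_congr rfl fun Φ _ => (Fintype.sum_mul_sum _ _).symm
        _ = ∑ Φ : DotDiagram.Hom X H,
              (if Function.Surjective Φ.onB then (1 : K) else 0)
                * (if Function.Surjective Φ.onD then (1 : K) else 0) := by
            refine Finset.sum_congr rfl fun Φ _ => ?_
            rw [ie_aux, ie_aux]
        _ = (Nat.card {Φ : DotDiagram.Hom X H //
              Function.Surjective Φ.onB ∧ Function.Surjective Φ.onD} : K) := by
            rw [card_subtype_cast]
            refine Finset.sum_congr rfl fun Φ _ => ?_
            by_cases h1 : Function.Surjective Φ.onB <;>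
              by_cases h2 : Function.Surjective Φ.onD <;> simp [h1, h2]
    have key : ∀ H : DotDiagram σ, H.Closed →
        Nat.card {Φ : DotDiagram.Hom F H //
            Function.Surjective Φ.onB ∧ Function.Surjective Φ.onD}
          = Nat.card {Φ : DotDiagram.Hom G H //
              Function.Surjective Φ.onB ∧ Function.Surjective Φ.onD} := by
      intro H hHc
      have h1 := main F H hFs hFc hHc
      have h2 := main G H hGs hGc hHc
      have h3 : (Nat.card {Φ : DotDiagram.Hom F H //
          Function.Surjective Φ.onB ∧ Function.Surjective Φ.onD} : K)
          = (Nat.card {Φ : DotDiagram.Hom G H //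
              Function.Surjective Φ.onB ∧ Function.Surjective Φ.onD} : K) := by
        rw [h1, h2]
        exact Finset.sum_congr rfl fun B₀ _ => Finset.sum_congr rfl fun D₀ _ => by
          rw [hv (cntI K H (· ∈ B₀) (· ∈ D₀))]
      exact_mod_cast h3
    have hGG : Nat.card {Φ : DotDiagram.Hom G G //
        Function.Surjective Φ.onB ∧ Function.Surjective Φ.onD} ≠ 0 := by
      have : Nonempty {Φ : DotDiagram.Hom G G //
          Function.Surjective Φ.onB ∧ Function.Surjective Φ.onD} :=
        ⟨⟨idHom G, Function.surjective_id, Function.surjective_id⟩⟩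
      exact Nat.card_pos.ne'
    have hFF : Nat.card {Φ : DotDiagram.Hom F F //
        Function.Surjective Φ.onB ∧ Function.Surjective Φ.onD} ≠ 0 := by
      have : Nonempty {Φ : DotDiagram.Hom F F //
          Function.Surjective Φ.onB ∧ Function.Surjective Φ.onD} :=
        ⟨⟨idHom F, Function.surjective_id, Function.surjective_id⟩⟩
      exact Nat.card_pos.ne'
    have hFG : Nonempty {Φ : DotDiagram.Hom F G //
        Function.Surjective Φ.onB ∧ Function.Surjective Φ.onD} := by
      have h : Nat.card {Φ : DotDiagram.Hom F G //
          Function.Surjective Φ.onB ∧ Function.Surjective Φ.onD} ≠ 0 := by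
        rw [key G hGc]; exact hGG
      exact (Nat.card_ne_zero.1 h).1
    have hGF : Nonempty {Φ : DotDiagram.Hom G F //
        Function.Surjective Φ.onB ∧ Function.Surjective Φ.onD} := by
      have h : Nat.card {Φ : DotDiagram.Hom G F //
          Function.Surjective Φ.onB ∧ Function.Surjective Φ.onD} ≠ 0 := by
        rw [← key F hFc]; exact hFF
      exact (Nat.card_ne_zero.1 h).1
    obtain ⟨⟨Φ, hsB, hsD⟩⟩ := hFG
    obtain ⟨⟨Ψ, hsB', hsD'⟩⟩ := hGF
    have hcB : Fintype.card F.B = Fintype.card G.B :=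
      le_antisymm (Fintype.card_le_of_surjective Ψ.onB hsB')
        (Fintype.card_le_of_surjective Φ.onB hsB)
    have hcD : Fintype.card F.D = Fintype.card G.D :=
      le_antisymm (Fintype.card_le_of_surjective Ψ.onD hsD')
        (Fintype.card_le_of_surjective Φ.onD hsD)
    exact ⟨Φ, (Fintype.bijective_iff_surjective_and_card Φ.onB).2 ⟨hsB, hcB⟩,
      (Fintype.bijective_iff_surjective_and_card Φ.onD).2 ⟨hsD, hcD⟩⟩
end

section
/- Let K be a field of characteristic 0 and Σ a monoidal signature. Two closed (not necessarily simple) dot-diagrams F and G over Σ are isomorphic if and only if for every interpretation M of Σ over K, the values ⟦F⟧_M and ⟦G⟧_M in K are equal. -/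
open scoped Classical
set_option linter.unusedSectionVars false

namespace Interp
variable {σ : Signature} {R : Type} [CommSemiring R]

lemma val_congr (M : Interp σ R) {f g : σ.Mor} (h : g = f)
    (x1 : (i : Fin (σ.dom g).length) → M.car ((σ.dom g).get i))
    (y1 : (j : Fin (σ.cod g).length) → M.car ((σ.cod g).get j))
    (x2 : (i : Fin (σ.dom f).length) → M.car ((σ.dom f).get i))
    (y2 : (j : Fin (σ.cod f).length) → M.car ((σ.cod f).get j))
    (hx : ∀ i : Fin (σ.dom f).length, HEq (x1 (Fin.cast (by rw [h]) i)) (x2 i))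
    (hy : ∀ j : Fin (σ.cod f).length, HEq (y1 (Fin.cast (by rw [h]) j)) (y2 j)) :
    M.val g x1 y1 = M.val f x2 y2 := by
  subst h
  congr 1
  · funext i; exact eq_of_heq (hx i)
  · funext j; exact eq_of_heq (hy j)

end Interp

namespace DotDiagram
variable {σ : Signature}

lemma value_eq_of_iso {K : Type} [CommSemiring K] (F G : DotDiagram σ)
    (h : Isomorphic F G) (M : Interp σ K) : M.value F = M.value G := by
  obtain ⟨Φ, hB, hD⟩ := h
  let eB : F.B ≃ G.B := Equiv.ofBijective _ hB
  let eD : F.D ≃ G.D := Equiv.ofBijective _ hD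
  let E : ((d : F.D) → M.car (F.ld d)) ≃ ((d' : G.D) → M.car (G.ld d')) :=
    Equiv.piCongr eD (fun d => Equiv.cast (congrArg M.car (Φ.map_ld d).symm))
  have key : ∀ φ : (d : F.D) → M.car (F.ld d),
      ∏ b' : G.B, M.boxEntry G (E φ) b' = ∏ b : F.B, M.boxEntry F φ b := by
    intro φ
    rw [← Equiv.prod_comp eB]
    refine Finset.prod_congr rfl fun b _ => ?_
    show M.boxEntry G (E φ) (Φ.onB b) = M.boxEntry F φ b
    unfold Interp.boxEntry
    refine M.val_congr (Φ.map_lb b) _ _ _ _ (fun i => ?_) (fun j => ?_)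
    · refine HEq.trans (cast_heq _ _) (HEq.trans ?_ (HEq.symm (cast_heq _ _)))
      have harg : G.win (Φ.onB b) (Fin.cast (by rw [Φ.map_lb b]) i) = eD (F.win b i) :=
        Φ.map_win b i
      have h1 : HEq ((E φ) (G.win (Φ.onB b) (Fin.cast (by rw [Φ.map_lb b]) i)))
          ((E φ) (eD (F.win b i))) := by rw [harg]
      refine h1.trans ?_
      have h2 : (E φ) (eD (F.win b i)) =
          (Equiv.cast (congrArg M.car (Φ.map_ld (F.win b i)).symm)) (φ (F.win b i)) :=
        Equiv.piCongr_apply_apply eD _ φ (F.win b i)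
      rw [h2]
      exact cast_heq _ _
    · refine HEq.trans (cast_heq _ _) (HEq.trans ?_ (HEq.symm (cast_heq _ _)))
      have harg : G.wout (Φ.onB b) (Fin.cast (by rw [Φ.map_lb b]) j) = eD (F.wout b j) :=
        Φ.map_wout b j
      have h1 : HEq ((E φ) (G.wout (Φ.onB b) (Fin.cast (by rw [Φ.map_lb b]) j)))
          ((E φ) (eD (F.wout b j))) := by rw [harg]
      refine h1.trans ?_
      have h2 : (E φ) (eD (F.wout b j)) =
          (Equiv.cast (congrArg M.car (Φ.map_ld (F.wout b j)).symm)) (φ (F.wout b j)) :=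
        Equiv.piCongr_apply_apply eD _ φ (F.wout b j)
      rw [h2]
      exact cast_heq _ _
  calc M.value F = ∑ φ : (d : F.D) → M.car (F.ld d), ∏ b' : G.B, M.boxEntry G (E φ) b' := by
        unfold Interp.value
        exact (Finset.sum_congr rfl fun φ _ => (key φ).symm)
    _ = M.value G := by
        unfold Interp.value
        exact Fintype.sum_equiv E _ _ (fun φ => rfl)

end DotDiagram

lemma exists_equiv_of_fiber_card_eq {X Y ι : Type} [Fintype X] [Fintype Y] (f : X → ι) (g : Y → ι)
    (h : ∀ i, Nat.card {x // f x = i} = Nat.card {y // g y = i}) :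
    ∃ e : X ≃ Y, ∀ x, g (e x) = f x := by
  classical
  have h' : ∀ i, Fintype.card {x // f x = i} = Fintype.card {y // g y = i} := by
    intro i
    rw [← Nat.card_eq_fintype_card, ← Nat.card_eq_fintype_card]
    exact h i
  refine ⟨(Equiv.sigmaFiberEquiv f).symm.trans
    ((Equiv.sigmaCongrRight fun i => Fintype.equivOfCardEq (h' i)).trans
      (Equiv.sigmaFiberEquiv g)), fun x => ?_⟩
  simp only [Equiv.trans_apply]
  set p := (Equiv.sigmaFiberEquiv f).symm x with hp
  have h1 : p.1 = f x := by
    have : Equiv.sigmaFiberEquiv f p = x := by rw [hp]; simp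
    exact p.2.2.symm.trans (congrArg f this)
  set q := (Equiv.sigmaCongrRight fun i => Fintype.equivOfCardEq (h' i)) p with hq
  have h2 : q.1 = p.1 := by rw [hq]; rfl
  have h3 : Equiv.sigmaFiberEquiv g q = q.2.1 := rfl
  rw [h3, q.2.2, h2, h1]

lemma sum_single_apply {B ι : Type} [Fintype B] (u : B → ι) (i : ι) :
    (∑ b : B, Finsupp.single (u b) 1) i = Nat.card {b // u b = i} := by
  classical
  rw [Nat.card_eq_fintype_card, Finsupp.finset_sum_apply]
  simp only [Finsupp.single_apply]
  rw [Fintype.card_subtype, Finset.card_filter]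

lemma ofFn_len {α : Type} {n m : ℕ} {u : Fin n → α} {v : Fin m → α}
    (h : List.ofFn u = List.ofFn v) : n = m := by
  have := congrArg List.length h
  simpa using this

lemma ofFn_point {α : Type} {n m : ℕ} {u : Fin n → α} {v : Fin m → α}
    (h : List.ofFn u = List.ofFn v) (i : Fin n) :
    u i = v (Fin.cast (ofFn_len h) i) := by
  have hl : n = m := ofFn_len h
  subst hl
  exact congrFun (List.ofFn_injective h) i

lemma prod_X_single {R ι B : Type} [CommSemiring R] [Fintype B] (u : B → ι) :
    (∏ b : B, (MvPolynomial.X (u b) : MvPolynomial ι R)) =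
      MvPolynomial.monomial (∑ b : B, Finsupp.single (u b) 1) 1 := by
  classical
  have H : ∀ s : Finset B, (∏ b ∈ s, (MvPolynomial.X (u b) : MvPolynomial ι R)) =
      MvPolynomial.monomial (∑ b ∈ s, Finsupp.single (u b) 1) 1 := by
    intro s
    induction s using Finset.induction_on with
    | empty => simp
    | @insert a s ha ih =>
        rw [Finset.prod_insert ha, Finset.sum_insert ha, ih, MvPolynomial.X,
          MvPolynomial.monomial_mul, one_mul]
  exact H Finset.univ

lemma card_subtype_split {α : Type} [Fintype α] (p q : α → Prop) :
    Nat.card {x // q x} =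
      Nat.card {x // q x ∧ p x} + Nat.card {x // q x ∧ ¬ p x} := by
  classical
  rw [Nat.card_eq_fintype_card, Nat.card_eq_fintype_card, Nat.card_eq_fintype_card]
  rw [Fintype.card_subtype, Fintype.card_subtype, Fintype.card_subtype]
  rw [← Finset.filter_filter q p, ← Finset.filter_filter q (fun a => ¬ p a)]
  exact (Finset.card_filter_add_card_filter_not (p := p)
    (s := Finset.univ.filter q)).symm

section Machinery

variable {σ : Signature} {K : Type} [Field K] [CharZero K]

/-- Attached dots. -/
def Att (H : DotDiagram σ) (d : H.D) : Prop :=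
  (∃ b i, H.win b i = d) ∨ (∃ b j, H.wout b j = d)

variable (Z : Type) [Fintype Z] [DecidableEq Z] (lz : Z → σ.Obj)

/-- Carrier family: elements of `Z` with a given label. -/
def SubCar (A : σ.Obj) : Type := {z : Z // lz z = A}

noncomputable instance (A : σ.Obj) : Fintype (SubCar Z lz A) := by
  unfold SubCar; infer_instance

/-- Assignments of a diagram into the carrier family. -/
def Asg (H : DotDiagram σ) : Type := (d : H.D) → SubCar Z lz (H.ld d)

noncomputable instance instFintypeAsg (H : DotDiagram σ) : Fintype (Asg Z lz H) := by
  unfold Asg; infer_instance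

/-- The variable index of a box under an assignment. -/
def idx (H : DotDiagram σ) (φ : Asg Z lz H) (b : H.B) : σ.Mor × List Z × List Z :=
  (H.lb b, List.ofFn fun i => (φ (H.win b i)).1, List.ofFn fun j => (φ (H.wout b j)).1)

/-- The interpretation determined by a choice of variable values. -/
noncomputable def interpOf (x : σ.Mor × List Z × List Z → K) : Interp σ K where
  car := SubCar Z lz
  finCar := inferInstance
  val f t1 t2 := x (f, List.ofFn fun i => (t1 i).1, List.ofFn fun j => (t2 j).1)

lemma cast_subcar {A A' : σ.Obj} (h : A = A') (z : SubCar Z lz A) :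
    (cast (congrArg (SubCar Z lz) h) z).1 = z.1 := by subst h; rfl

lemma boxEntry_interpOf (H : DotDiagram σ) (x : σ.Mor × List Z × List Z → K)
    (φ : Asg Z lz H) (b : H.B) :
    (interpOf Z lz x).boxEntry H φ b = x (idx Z lz H φ b) := by
  show x (H.lb b, _, _) = x (H.lb b, _, _)
  beta_reduce
  erw [show (List.ofFn fun i => (cast (congrArg (SubCar Z lz) (H.tyIn b i))
        (φ (H.win b i)) : SubCar Z lz _).1) = List.ofFn fun i => (φ (H.win b i)).1 from
      congrArg List.ofFn (funext fun i => cast_subcar Z lz (H.tyIn b i) _),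
    show (List.ofFn fun j => (cast (congrArg (SubCar Z lz) (H.tyOut b j))
        (φ (H.wout b j)) : SubCar Z lz _).1) = List.ofFn fun j => (φ (H.wout b j)).1 from
      congrArg List.ofFn (funext fun j => cast_subcar Z lz (H.tyOut b j) _)]

/-- The value polynomial of a diagram. -/
noncomputable def P (H : DotDiagram σ) : MvPolynomial (σ.Mor × List Z × List Z) ℕ :=
  ∑ φ : Asg Z lz H, ∏ b : H.B, MvPolynomial.X (idx Z lz H φ b)

lemma eval_P (H : DotDiagram σ) (x : σ.Mor × List Z × List Z → K) :
    MvPolynomial.eval x ((P Z lz H).map (Nat.castRingHom K)) = (interpOf Z lz x).value H := by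
  unfold P Interp.value
  rw [map_sum, map_sum]
  refine Finset.sum_congr rfl (fun φ _ => ?_)
  rw [map_prod, map_prod]
  refine Finset.prod_congr rfl (fun b _ => ?_)
  rw [MvPolynomial.map_X, MvPolynomial.eval_X, boxEntry_interpOf]

lemma coeff_P (H : DotDiagram σ) (m : (σ.Mor × List Z × List Z) →₀ ℕ) :
    (P Z lz H).coeff m =
      Nat.card {φ : Asg Z lz H // (∑ b : H.B, Finsupp.single (idx Z lz H φ b) 1) = m} := by
  classical
  unfold P
  rw [MvPolynomial.coeff_sum]
  have hterm : ∀ φ : Asg Z lz H,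
      MvPolynomial.coeff m (∏ b : H.B, MvPolynomial.X (idx Z lz H φ b) : MvPolynomial _ ℕ) =
        if (∑ b : H.B, Finsupp.single (idx Z lz H φ b) 1) = m then 1 else 0 := by
    intro φ
    rw [prod_X_single, MvPolynomial.coeff_monomial]
  rw [Finset.sum_congr rfl (fun φ _ => hterm φ), Nat.card_eq_fintype_card,
    Fintype.card_subtype, Finset.card_filter]

lemma coeff_card_eq (F G : DotDiagram σ) (h : ∀ M : Interp σ K, M.value F = M.value G)
    (m : (σ.Mor × List Z × List Z) →₀ ℕ) :
    Nat.card {φ : Asg Z lz F // (∑ b : F.B, Finsupp.single (idx Z lz F φ b) 1) = m} =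
    Nat.card {ψ : Asg Z lz G // (∑ b : G.B, Finsupp.single (idx Z lz G ψ b) 1) = m} := by
  have hP : (P Z lz F).map (Nat.castRingHom K) = (P Z lz G).map (Nat.castRingHom K) :=
    MvPolynomial.funext fun x => by rw [eval_P (K := K), eval_P (K := K), h]
  have hc := congrArg (MvPolynomial.coeff m) hP
  rw [MvPolynomial.coeff_map, MvPolynomial.coeff_map] at hc
  have hn : (P Z lz F).coeff m = (P Z lz G).coeff m := Nat.cast_inj.mp hc
  rwa [coeff_P, coeff_P] at hn

end Machinery

section Machinery2

variable {σ : Signature} {K : Type} [Field K] [CharZero K]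

lemma extraction (F G : DotDiagram σ) (h : ∀ M : Interp σ K, M.value F = M.value G) :
    ∃ (e : F.B ≃ G.B) (φ : Asg (F.D ⊕ G.D) (Sum.elim F.ld G.ld) F),
      ∀ b : F.B,
        ((G.lb (e b), List.ofFn fun i => (Sum.inr (G.win (e b) i) : F.D ⊕ G.D),
           List.ofFn fun j => (Sum.inr (G.wout (e b) j) : F.D ⊕ G.D)) :
           σ.Mor × List (F.D ⊕ G.D) × List (F.D ⊕ G.D)) =
        (F.lb b, List.ofFn fun i => (φ (F.win b i)).1,
          List.ofFn fun j => (φ (F.wout b j)).1) := by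
  classical
  let Z := F.D ⊕ G.D
  let lz := Sum.elim F.ld G.ld
  let ψ₀ : Asg Z lz G := fun d => ⟨Sum.inr d, rfl⟩
  let m₀ := ∑ b : G.B, Finsupp.single (idx Z lz G ψ₀ b) 1
  have hcard := coeff_card_eq Z lz F G h m₀
  have hposG : 0 < Nat.card {ψ : Asg Z lz G //
      (∑ b : G.B, Finsupp.single (idx Z lz G ψ b) 1) = m₀} :=
    Nat.card_pos_iff.mpr ⟨⟨⟨ψ₀, rfl⟩⟩, inferInstance⟩
  have hpos : 0 < Nat.card {φ : Asg Z lz F //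
      (∑ b : F.B, Finsupp.single (idx Z lz F φ b) 1) = m₀} := hcard ▸ hposG
  obtain ⟨⟨φ, hφ⟩⟩ := (Nat.card_pos_iff.mp hpos).1
  have hfib : ∀ i, Nat.card {b : F.B // idx Z lz F φ b = i} =
      Nat.card {b : G.B // idx Z lz G ψ₀ b = i} := by
    intro i
    rw [← sum_single_apply, ← sum_single_apply, hφ]
  obtain ⟨e, he⟩ := exists_equiv_of_fiber_card_eq
    (fun b => idx Z lz F φ b) (fun b => idx Z lz G ψ₀ b) hfib
  exact ⟨e, φ, fun b => he b⟩

lemma attached_data (F G : DotDiagram σ) (h : ∀ M : Interp σ K, M.value F = M.value G) :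
    ∃ (e : F.B ≃ G.B) (hlb : ∀ b, G.lb (e b) = F.lb b)
      (β : {d : F.D // Att F d} → {d' : G.D // Att G d'}),
      Function.Surjective β ∧
      (∀ x, G.ld (β x).1 = F.ld x.1) ∧
      (∀ b i, (β ⟨F.win b i, Or.inl ⟨b, i, rfl⟩⟩).1 =
          G.win (e b) (Fin.cast (by rw [hlb b]) i)) ∧
      (∀ b j, (β ⟨F.wout b j, Or.inr ⟨b, j, rfl⟩⟩).1 =
          G.wout (e b) (Fin.cast (by rw [hlb b]) j)) := by
  obtain ⟨e, φ, hport⟩ := extraction F G h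
  have hlb : ∀ b, G.lb (e b) = F.lb b := fun b => congrArg Prod.fst (hport b)
  have hin : ∀ b, (List.ofFn fun i => (φ (F.win b i)).1) =
      List.ofFn fun i => (Sum.inr (G.win (e b) i) : F.D ⊕ G.D) :=
    fun b => (congrArg (fun p => p.2.1) (hport b)).symm
  have hout : ∀ b, (List.ofFn fun j => (φ (F.wout b j)).1) =
      List.ofFn fun j => (Sum.inr (G.wout (e b) j) : F.D ⊕ G.D) :=
    fun b => (congrArg (fun p => p.2.2) (hport b)).symm
  have hkey_in : ∀ b (i : Fin (σ.dom (F.lb b)).length),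
      (φ (F.win b i)).1 = Sum.inr (G.win (e b) (Fin.cast (ofFn_len (hin b)) i)) :=
    fun b i => ofFn_point (hin b) i
  have hkey_out : ∀ b (j : Fin (σ.cod (F.lb b)).length),
      (φ (F.wout b j)).1 = Sum.inr (G.wout (e b) (Fin.cast (ofFn_len (hout b)) j)) :=
    fun b j => ofFn_point (hout b) j
  have hinr : ∀ x : {d : F.D // Att F d}, ∃ d', (φ x.1).1 = Sum.inr d' ∧ Att G d' := by
    rintro ⟨d, (⟨b, i, rfl⟩ | ⟨b, j, rfl⟩)⟩
    · exact ⟨_, hkey_in b i, Or.inl ⟨_, _, rfl⟩⟩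
    · exact ⟨_, hkey_out b j, Or.inr ⟨_, _, rfl⟩⟩
  refine ⟨e, hlb, fun x => ⟨(hinr x).choose, (hinr x).choose_spec.2⟩, ?_, ?_, ?_, ?_⟩
  · rintro ⟨d', (⟨b', i', rfl⟩ | ⟨b', i', rfl⟩)⟩
    · obtain ⟨b, hb⟩ : ∃ b, e b = b' := ⟨e.symm b', e.apply_symm_apply b'⟩
      subst hb
      set i := Fin.cast (show (σ.dom (G.lb (e b))).length = (σ.dom (F.lb b)).length by
        rw [hlb b]) i' with hi
      refine ⟨⟨F.win b i, Or.inl ⟨b, i, rfl⟩⟩, Subtype.ext ?_⟩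
      have hc : (Sum.inr ((hinr ⟨F.win b i, Or.inl ⟨b, i, rfl⟩⟩).choose) : F.D ⊕ G.D) =
          Sum.inr (G.win (e b) (Fin.cast (ofFn_len (hin b)) i)) :=
        ((hinr ⟨F.win b i, Or.inl ⟨b, i, rfl⟩⟩).choose_spec.1).symm.trans (hkey_in b i)
      exact (Sum.inr_injective hc).trans (congrArg (G.win (e b)) (Fin.ext rfl))
    · obtain ⟨b, hb⟩ : ∃ b, e b = b' := ⟨e.symm b', e.apply_symm_apply b'⟩
      subst hb
      set j := Fin.cast (show (σ.cod (G.lb (e b))).length = (σ.cod (F.lb b)).length by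
        rw [hlb b]) i' with hj
      refine ⟨⟨F.wout b j, Or.inr ⟨b, j, rfl⟩⟩, Subtype.ext ?_⟩
      have hc : (Sum.inr ((hinr ⟨F.wout b j, Or.inr ⟨b, j, rfl⟩⟩).choose) : F.D ⊕ G.D) =
          Sum.inr (G.wout (e b) (Fin.cast (ofFn_len (hout b)) j)) :=
        ((hinr ⟨F.wout b j, Or.inr ⟨b, j, rfl⟩⟩).choose_spec.1).symm.trans (hkey_out b j)
      exact (Sum.inr_injective hc).trans (congrArg (G.wout (e b)) (Fin.ext rfl))
  · intro x
    have hv : Sum.elim F.ld G.ld (Sum.inr ((hinr x).choose) : F.D ⊕ G.D) = F.ld x.1 :=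
      ((hinr x).choose_spec.1) ▸ (φ x.1).2
    exact hv
  · intro b i
    have hc : (Sum.inr ((hinr ⟨F.win b i, Or.inl ⟨b, i, rfl⟩⟩).choose) : F.D ⊕ G.D) =
        Sum.inr (G.win (e b) (Fin.cast (ofFn_len (hin b)) i)) :=
      ((hinr ⟨F.win b i, Or.inl ⟨b, i, rfl⟩⟩).choose_spec.1).symm.trans (hkey_in b i)
    exact (Sum.inr_injective hc).trans (congrArg (G.win (e b)) (Fin.ext rfl))
  · intro b j
    have hc : (Sum.inr ((hinr ⟨F.wout b j, Or.inr ⟨b, j, rfl⟩⟩).choose) : F.D ⊕ G.D) =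
        Sum.inr (G.wout (e b) (Fin.cast (ofFn_len (hout b)) j)) :=
      ((hinr ⟨F.wout b j, Or.inr ⟨b, j, rfl⟩⟩).choose_spec.1).symm.trans (hkey_out b j)
    exact (Sum.inr_injective hc).trans (congrArg (G.wout (e b)) (Fin.ext rfl))

end Machinery2

section Machinery3

variable {σ : Signature} {K : Type} [Field K] [CharZero K]

lemma card_label_eq (F G : DotDiagram σ) (h : ∀ M : Interp σ K, M.value F = M.value G)
    (A : σ.Obj) :
    Nat.card {d : F.D // F.ld d = A} = Nat.card {d : G.D // G.ld d = A} := by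
  classical
  let M : Interp σ K :=
    { car := fun B => Fin (if B = A then 2 else 1)
      finCar := fun B => inferInstance
      val := fun _ _ _ => 1 }
  have hval : ∀ H : DotDiagram σ,
      M.value H = ((2 ^ Nat.card {d : H.D // H.ld d = A} : ℕ) : K) := by
    intro H
    have h1 : M.value H = ∑ _φ : ((d : H.D) → M.car (H.ld d)), (1 : K) := by
      unfold Interp.value
      refine Finset.sum_congr rfl fun φ _ => ?_
      exact Finset.prod_eq_one fun b _ => rfl
    have h2 : Fintype.card ((d : H.D) → M.car (H.ld d)) =
        2 ^ Nat.card {d : H.D // H.ld d = A} := by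
      rw [Fintype.card_pi]
      have : ∀ d : H.D, Fintype.card (M.car (H.ld d)) = if H.ld d = A then 2 else 1 := by
        intro d
        show Fintype.card (Fin (if H.ld d = A then 2 else 1)) = _
        rw [Fintype.card_fin]
      rw [Finset.prod_congr rfl (fun d _ => this d), Finset.prod_ite (fun _ => 2) (fun _ => 1),
        Finset.prod_const, Finset.prod_const_one, mul_one, Nat.card_eq_fintype_card,
        Fintype.card_subtype]
    rw [h1, Finset.sum_const, Finset.card_univ, nsmul_eq_mul, mul_one, h2]
  have := (hval F).symm.trans ((h M).trans (hval G))
  have hn := Nat.cast_inj (R := K) |>.mp this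
  exact Nat.pow_right_injective (le_refl 2) hn

end Machinery3

section Main

variable {σ : Signature}

theorem completeness_backward {K : Type} [Field K] [CharZero K] (F G : DotDiagram σ)
    (hFc : F.Closed) (hGc : G.Closed)
    (h : ∀ M : Interp σ K, M.value F = M.value G) : DotDiagram.Isomorphic F G := by
  classical
  obtain ⟨e, hlb, β, hsurj, hld, hwin, hwout⟩ := attached_data F G h
  obtain ⟨e2, hlb2, β2, hsurj2, -, -, -⟩ := attached_data G F (fun M => (h M).symm)
  have hcard : Fintype.card {d : F.D // Att F d} = Fintype.card {d' : G.D // Att G d'} :=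
    le_antisymm (Fintype.card_le_of_surjective β2 hsurj2)
      (Fintype.card_le_of_surjective β hsurj)
  have hbij : Function.Bijective β :=
    (Fintype.bijective_iff_surjective_and_card β).mpr ⟨hsurj, hcard⟩
  let βe : {d : F.D // Att F d} ≃ {d' : G.D // Att G d'} := Equiv.ofBijective β hbij
  -- attached per-label counts agree
  have hatt : ∀ A, Nat.card {d : F.D // F.ld d = A ∧ Att F d} =
      Nat.card {d' : G.D // G.ld d' = A ∧ Att G d'} := by
    intro A
    refine Nat.card_congr ?_
    refine ((Equiv.subtypeEquivRight fun d => and_comm).trans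
      ((Equiv.subtypeSubtypeEquivSubtypeInter (Att F) (fun d => F.ld d = A)).symm.trans
        ((Equiv.subtypeEquiv βe fun x => ?_).trans
          ((Equiv.subtypeSubtypeEquivSubtypeInter (Att G) (fun d => G.ld d = A)).trans
            (Equiv.subtypeEquivRight fun d => and_comm)))))
    show F.ld x.1 = A ↔ G.ld (β x).1 = A
    rw [hld x]
  -- isolated per-label counts agree
  have hiso : ∀ A, Nat.card {d : F.D // F.ld d = A ∧ ¬ Att F d} =
      Nat.card {d' : G.D // G.ld d' = A ∧ ¬ Att G d'} := by
    intro A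
    have hsF := card_subtype_split (Att F) (fun d : F.D => F.ld d = A)
    have hsG := card_subtype_split (Att G) (fun d : G.D => G.ld d = A)
    have htot := card_label_eq F G h A
    have ha := hatt A
    omega
  have hfib : ∀ A, Nat.card {x : {d : F.D // ¬ Att F d} // F.ld x.1 = A} =
      Nat.card {y : {d' : G.D // ¬ Att G d'} // G.ld y.1 = A} := by
    intro A
    have eF : {x : {d : F.D // ¬ Att F d} // F.ld x.1 = A} ≃
        {d : F.D // F.ld d = A ∧ ¬ Att F d} :=
      (Equiv.subtypeSubtypeEquivSubtypeInter (fun d => ¬ Att F d) (fun d => F.ld d = A)).trans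
        (Equiv.subtypeEquivRight fun d => and_comm)
    have eG : {y : {d' : G.D // ¬ Att G d'} // G.ld y.1 = A} ≃
        {d' : G.D // G.ld d' = A ∧ ¬ Att G d'} :=
      (Equiv.subtypeSubtypeEquivSubtypeInter (fun d => ¬ Att G d) (fun d => G.ld d = A)).trans
        (Equiv.subtypeEquivRight fun d => and_comm)
    rw [Nat.card_congr eF, Nat.card_congr eG]
    exact hiso A
  obtain ⟨γ, hγ⟩ := exists_equiv_of_fiber_card_eq
    (fun x : {d : F.D // ¬ Att F d} => F.ld x.1)
    (fun y : {d' : G.D // ¬ Att G d'} => G.ld y.1) hfib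
  let onD : F.D ≃ G.D :=
    (Equiv.sumCompl (Att F)).symm.trans ((βe.sumCongr γ).trans (Equiv.sumCompl (Att G)))
  have honD : ∀ (d : F.D) (hd : Att F d), onD d = (β ⟨d, hd⟩).1 := by
    intro d hd
    have h1 : (Equiv.sumCompl (Att F)).symm d = Sum.inl ⟨d, hd⟩ := by
      apply (Equiv.sumCompl (Att F)).injective
      rw [Equiv.apply_symm_apply, Equiv.sumCompl_apply_inl]
    show (Equiv.sumCompl (Att G)) ((βe.sumCongr γ) ((Equiv.sumCompl (Att F)).symm d)) = _
    rw [h1]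
    rfl
  have honD' : ∀ (d : F.D) (hd : ¬ Att F d), onD d = (γ ⟨d, hd⟩).1 := by
    intro d hd
    have h1 : (Equiv.sumCompl (Att F)).symm d = Sum.inr ⟨d, hd⟩ := by
      apply (Equiv.sumCompl (Att F)).injective
      rw [Equiv.apply_symm_apply, Equiv.sumCompl_apply_inr]
    show (Equiv.sumCompl (Att G)) ((βe.sumCongr γ) ((Equiv.sumCompl (Att F)).symm d)) = _
    rw [h1]
    rfl
  refine ⟨⟨e, onD, hlb, ?_, ?_, ?_, hFc.1.trans hGc.1.symm, hFc.2.trans hGc.2.symm, ?_, ?_⟩,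
    e.bijective, onD.bijective⟩
  · -- map_ld
    intro d
    by_cases hd : Att F d
    · rw [honD d hd]; exact hld ⟨d, hd⟩
    · rw [honD' d hd]; exact hγ ⟨d, hd⟩
  · -- map_win
    intro b i
    rw [honD (F.win b i) (Or.inl ⟨b, i, rfl⟩)]
    exact (hwin b i).symm
  · -- map_wout
    intro b j
    rw [honD (F.wout b j) (Or.inr ⟨b, j, rfl⟩)]
    exact (hwout b j).symm
  · intro k
    exact absurd k.isLt (by simp [hFc.1])
  · intro k
    exact absurd k.isLt (by simp [hFc.2])

end Main

/-- Completeness for closed (not necessarily simple) dot-diagrams: over a field `K` of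
characteristic `0`, two closed dot-diagrams are isomorphic iff their values agree under
every interpretation of the signature over `K`. -/
theorem DotDiagram.completeness_closed {σ : Signature}
    (K : Type) [Field K] [CharZero K] (F G : DotDiagram σ)
    (hFc : F.Closed) (hGc : G.Closed) :
    DotDiagram.Isomorphic F G ↔ ∀ M : Interp σ K, M.value F = M.value G := by
  constructor
  · intro hiso M
    exact DotDiagram.value_eq_of_iso F G hiso M
  · intro h
    exact completeness_backward F G hFc hGc h
end

section
/- Let K be a field of characteristic 0 and Σ a monoidal signature. Two dot-diagrams F and G over Σ with the same input list and the same output list are isomorphic if and only if for every interpretation M of Σ over K, the value matrices ⟦F⟧_M and ⟦G⟧_M are equal. -/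
open scoped Classical

namespace HGC

open Finset

variable {σ : Signature}

/-- Boundary dots of a diagram. -/
def bSet (G : DotDiagram σ) : Set G.D := {e | (∃ k, G.pin k = e) ∨ (∃ l, G.pout l = e)}

/-- The "structure" interpretation attached to a diagram `G`, with allowed-dot set
`bSet G ∪ T` and allowed-box set `U`. -/
noncomputable def Gamma (G : DotDiagram σ) (T : Finset G.D) (U : Finset G.B)
    (K : Type) [CommSemiring K] : Interp σ K where
  car A := {e : G.D // G.ld e = A ∧ (e ∈ bSet G ∨ e ∈ T)}
  finCar A := Subtype.fintype _
  val f xs ys :=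
    ∑ c : G.B, if h : G.lb c = f then
      (if (c ∈ U ∧ (∀ i, ((xs i).1 = G.win c (Fin.cast (by rw [h]) i))) ∧
           (∀ j, ((ys j).1 = G.wout c (Fin.cast (by rw [h]) j)))) then 1 else 0)
    else 0

/-- The wiring-compatibility condition for box `b` of `F` mapped to box `c` of `G`
under a dot map `ψ`. -/
def boxCond (F G : DotDiagram σ) (ψ : F.D → G.D) (b : F.B) (c : G.B) : Prop :=
  G.lb c = F.lb b ∧
  (∀ (i : ℕ) (h1 : i < (σ.dom (F.lb b)).length) (h2 : i < (σ.dom (G.lb c)).length),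
    ψ (F.win b ⟨i, h1⟩) = G.win c ⟨i, h2⟩) ∧
  (∀ (j : ℕ) (h1 : j < (σ.cod (F.lb b)).length) (h2 : j < (σ.cod (G.lb c)).length),
    ψ (F.wout b ⟨j, h1⟩) = G.wout c ⟨j, h2⟩)

/-- Admissible pairs: the conditions for `(ψ, β)` to constitute a homomorphism `F → G`. -/
def Adm (F G : DotDiagram σ) (hIn : F.nIn = G.nIn) (hOut : F.nOut = G.nOut)
    (ψ : F.D → G.D) (β : F.B → G.B) : Prop :=
  (∀ d, G.ld (ψ d) = F.ld d) ∧
  (∀ b, boxCond F G ψ b (β b)) ∧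
  (∀ k, ψ (F.pin k) = G.pin (Fin.cast hIn k)) ∧
  (∀ l, ψ (F.pout l) = G.pout (Fin.cast hOut l))

variable {K : Type} [Field K] [CharZero K]

/-- Canonical input boundary values. -/
noncomputable def xc (F G : DotDiagram σ) (hIn : F.nIn = G.nIn)
    (hlIn : ∀ k, F.ld (F.pin k) = G.ld (G.pin (Fin.cast hIn k)))
    (T : Finset G.D) (U : Finset G.B) (K : Type) [CommSemiring K] :
    Fin F.nIn → Σ A : σ.Obj, (Gamma G T U K).car A := fun k =>
  ⟨F.ld (F.pin k), ⟨G.pin (Fin.cast hIn k), (hlIn k).symm, Or.inl (Or.inl ⟨_, rfl⟩)⟩⟩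

/-- Canonical output boundary values. -/
noncomputable def yc (F G : DotDiagram σ) (hOut : F.nOut = G.nOut)
    (hlOut : ∀ l, F.ld (F.pout l) = G.ld (G.pout (Fin.cast hOut l)))
    (T : Finset G.D) (U : Finset G.B) (K : Type) [CommSemiring K] :
    Fin F.nOut → Σ A : σ.Obj, (Gamma G T U K).car A := fun l =>
  ⟨F.ld (F.pout l), ⟨G.pout (Fin.cast hOut l), (hlOut l).symm, Or.inl (Or.inr ⟨_, rfl⟩)⟩⟩

end HGC
namespace HGC

variable {σ : Signature} {K : Type} [Field K] [CharZero K]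

lemma car_cast_fst (G : DotDiagram σ) (T : Finset G.D) (U : Finset G.B)
    {A B : σ.Obj} (hA : A = B) (v : (Gamma G T U K).car A) :
    (cast (congrArg (Gamma G T U K).car hA) v).1 = v.1 := by cases hA; rfl

lemma gamma_boxEntry (F G : DotDiagram σ) (T : Finset G.D) (U : Finset G.B)
    (φ : (d : F.D) → (Gamma G T U K).car (F.ld d)) (b : F.B) :
    (Gamma G T U K).boxEntry F φ b =
      ∑ c : G.B, if (boxCond F G (fun d => (φ d).1) b c ∧ c ∈ U)
        then (1 : K) else 0 := by
  simp only [boxCond]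
  show Finset.sum _ _ = _
  refine Finset.sum_congr rfl fun c _ => ?_
  by_cases h : G.lb c = F.lb b
  · rw [dif_pos h]
    congr 1
    rw [eq_iff_iff]
    constructor
    · rintro ⟨hU, hw, hw'⟩
      refine ⟨⟨h, ?_, ?_⟩, hU⟩
      · intro i h1 h2
        have := hw ⟨i, h1⟩
        rwa [car_cast_fst _ _ _ (F.tyIn b _), show (Fin.cast (by rw [h]) (⟨i, h1⟩ : Fin _) :
          Fin (σ.dom (G.lb c)).length) = ⟨i, h2⟩ from Fin.ext rfl] at this
      · intro j h1 h2
        have := hw' ⟨j, h1⟩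
        rwa [car_cast_fst _ _ _ (F.tyOut b _), show (Fin.cast (by rw [h]) (⟨j, h1⟩ : Fin _) :
          Fin (σ.cod (G.lb c)).length) = ⟨j, h2⟩ from Fin.ext rfl] at this
    · rintro ⟨⟨-, hw, hw'⟩, hU⟩
      refine ⟨hU, fun i => ?_, fun j => ?_⟩
      · rw [car_cast_fst _ _ _ (F.tyIn b _)]
        have := hw i.1 i.2 (by rw [h]; exact i.2)
        convert this using 2 <;> exact Fin.ext rfl
      · rw [car_cast_fst _ _ _ (F.tyOut b _)]
        have := hw' j.1 j.2 (by rw [h]; exact j.2)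
        convert this using 2 <;> exact Fin.ext rfl
  · rw [dif_neg h]; refine (if_neg ?_).symm
    tauto

end HGC
namespace HGC

variable {σ : Signature} {K : Type} [Field K] [CharZero K]

lemma sigma_mk_eq_iff (M : Interp σ K) {A : σ.Obj} (u v : M.car A) :
    (⟨A, u⟩ : Σ B : σ.Obj, M.car B) = ⟨A, v⟩ ↔ u = v := by
  constructor
  · intro h; exact eq_of_heq (Sigma.mk.inj_iff.mp h).2
  · rintro rfl; rfl

lemma gamma_value (F G : DotDiagram σ) (hIn : F.nIn = G.nIn) (hOut : F.nOut = G.nOut)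
    (hlIn : ∀ k, F.ld (F.pin k) = G.ld (G.pin (Fin.cast hIn k)))
    (hlOut : ∀ l, F.ld (F.pout l) = G.ld (G.pout (Fin.cast hOut l)))
    (T : Finset G.D) (U : Finset G.B) :
    (Gamma G T U K).valueMatrix F (xc F G hIn hlIn T U K) (yc F G hOut hlOut T U K) =
      ∑ pb : (F.D → G.D) × (F.B → G.B),
        if Adm F G hIn hOut pb.1 pb.2 ∧ (∀ d, pb.1 d ∈ bSet G ∨ pb.1 d ∈ T) ∧
           (∀ b, pb.2 b ∈ U) then (1 : K) else 0 := by
  classical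
  set M := Gamma G T U K with hM
  set Fn : (F.D → G.D) × (F.B → G.B) → K := fun pb =>
    if Adm F G hIn hOut pb.1 pb.2 ∧ (∀ d, pb.1 d ∈ bSet G ∨ pb.1 d ∈ T) ∧
       (∀ b, pb.2 b ∈ U) then (1 : K) else 0 with hFn
  have step1 : ∀ φ : (d : F.D) → M.car (F.ld d),
      (if (∀ k, (⟨F.ld (F.pin k), φ (F.pin k)⟩ : Σ A : σ.Obj, M.car A)
              = xc F G hIn hlIn T U K k) ∧
          (∀ l, (⟨F.ld (F.pout l), φ (F.pout l)⟩ : Σ A : σ.Obj, M.car A)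
              = yc F G hOut hlOut T U K l)
       then ∏ b : F.B, M.boxEntry F φ b else 0)
      = ∑ β : F.B → G.B, Fn (fun d => (φ d).1, β) := by
    intro φ
    have hpin : (∀ k, (⟨F.ld (F.pin k), φ (F.pin k)⟩ : Σ A : σ.Obj, M.car A)
        = xc F G hIn hlIn T U K k) ↔ (∀ k, (φ (F.pin k)).1 = G.pin (Fin.cast hIn k)) := by
      refine forall_congr' fun k => ?_
      rw [show xc F G hIn hlIn T U K k
          = ⟨F.ld (F.pin k), ⟨G.pin (Fin.cast hIn k), (hlIn k).symm,
              Or.inl (Or.inl ⟨_, rfl⟩)⟩⟩ from rfl]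
      exact (sigma_mk_eq_iff M _ _).trans Subtype.ext_iff
    have hpout : (∀ l, (⟨F.ld (F.pout l), φ (F.pout l)⟩ : Σ A : σ.Obj, M.car A)
        = yc F G hOut hlOut T U K l) ↔ (∀ l, (φ (F.pout l)).1 = G.pout (Fin.cast hOut l)) := by
      refine forall_congr' fun l => ?_
      rw [show yc F G hOut hlOut T U K l
          = ⟨F.ld (F.pout l), ⟨G.pout (Fin.cast hOut l), (hlOut l).symm,
              Or.inl (Or.inr ⟨_, rfl⟩)⟩⟩ from rfl]
      exact (sigma_mk_eq_iff M _ _).trans Subtype.ext_iff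
    by_cases hP : (∀ k, (φ (F.pin k)).1 = G.pin (Fin.cast hIn k)) ∧
        (∀ l, (φ (F.pout l)).1 = G.pout (Fin.cast hOut l))
    · rw [if_pos (by rw [hpin, hpout]; exact ⟨hP.1, hP.2⟩)]
      calc ∏ b : F.B, M.boxEntry F φ b
          = ∏ b : F.B, ∑ c : G.B,
              (if (boxCond F G (fun d => (φ d).1) b c ∧ c ∈ U) then (1 : K) else 0) :=
            Finset.prod_congr rfl fun b _ => gamma_boxEntry F G T U φ b
        _ = ∑ β ∈ Fintype.piFinset (fun _ : F.B => (Finset.univ : Finset G.B)),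
              ∏ b : F.B, (if (boxCond F G (fun d => (φ d).1) b (β b) ∧ β b ∈ U)
                then (1 : K) else 0) := by
            rw [Finset.prod_univ_sum]
        _ = ∑ β : F.B → G.B, Fn (fun d => (φ d).1, β) := by
            rw [Fintype.piFinset_univ]
            refine Finset.sum_congr rfl fun β _ => ?_
            rw [Finset.prod_boole]
            rw [hFn]
            congr 1
            rw [eq_iff_iff]
            constructor
            · intro hb
              refine ⟨⟨fun d => (φ d).2.1, fun b => (hb b (Finset.mem_univ b)).1,
                hP.1, hP.2⟩, fun d => (φ d).2.2, fun b => (hb b (Finset.mem_univ b)).2⟩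
            · rintro ⟨⟨-, hbc, -, -⟩, -, hU⟩
              exact fun b _ => ⟨hbc b, hU b⟩
    · rw [if_neg (by rw [hpin, hpout]; exact hP)]
      symm
      refine Finset.sum_eq_zero fun β _ => ?_
      rw [hFn]; dsimp only; rw [if_neg]
      rintro ⟨⟨-, -, h3, h4⟩, -, -⟩
      exact hP ⟨h3, h4⟩
  have hg0 : ∀ ψ : F.D → G.D,
      (∑ β : F.B → G.B, Fn (ψ, β)) ≠ 0 →
      (∀ d, G.ld (ψ d) = F.ld d ∧ (ψ d ∈ bSet G ∨ ψ d ∈ T)) := by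
    intro ψ hne
    by_contra hc
    apply hne
    refine Finset.sum_eq_zero fun β _ => ?_
    rw [hFn]; dsimp only; rw [if_neg]
    rintro ⟨⟨h1, -, -, -⟩, h2, -⟩
    exact hc fun d => ⟨h1 d, h2 d⟩
  calc (Gamma G T U K).valueMatrix F (xc F G hIn hlIn T U K) (yc F G hOut hlOut T U K)
      = ∑ φ : (d : F.D) → M.car (F.ld d), ∑ β : F.B → G.B, Fn (fun d => (φ d).1, β) :=
        Finset.sum_congr rfl fun φ _ => step1 φ
    _ = ∑ s : {ψ : F.D → G.D // ∀ d, G.ld (ψ d) = F.ld d ∧ (ψ d ∈ bSet G ∨ ψ d ∈ T)},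
          ∑ β : F.B → G.B, Fn (s.1, β) := by
        exact Equiv.sum_comp
          (Equiv.subtypePiEquivPi
            (p := fun d (e : G.D) => G.ld e = F.ld d ∧ (e ∈ bSet G ∨ e ∈ T))).symm
          (fun s => ∑ β : F.B → G.B, Fn (s.1, β))
    _ = ∑ ψ ∈ Finset.univ.filter
          (fun ψ : F.D → G.D => ∀ d, G.ld (ψ d) = F.ld d ∧ (ψ d ∈ bSet G ∨ ψ d ∈ T)),
          ∑ β : F.B → G.B, Fn (ψ, β) := by
        exact (Finset.sum_subtype
          (p := fun ψ : F.D → G.D => ∀ d, G.ld (ψ d) = F.ld d ∧ (ψ d ∈ bSet G ∨ ψ d ∈ T))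
          (Finset.univ.filter _) (fun ψ => by simp)
          (fun ψ => ∑ β : F.B → G.B, Fn (ψ, β))).symm
    _ = ∑ ψ : F.D → G.D, ∑ β : F.B → G.B, Fn (ψ, β) := by
        refine Finset.sum_filter_of_ne fun ψ _ hne => hg0 ψ hne
    _ = ∑ pb : (F.D → G.D) × (F.B → G.B), Fn pb := by
        rw [Fintype.sum_prod_type]

end HGC
namespace HGC

variable {σ : Signature} {K : Type} [Field K] [CharZero K]

lemma neg_one_powerset {α : Type} [DecidableEq α] (V : Finset α) :
    ∑ T ∈ V.powerset, (-1 : K) ^ (V.card - T.card) = if V = ∅ then 1 else 0 := by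
  have hk : ∀ T ∈ V.powerset, (-1 : K) ^ (V.card - T.card)
      = (-1) ^ V.card * (-1) ^ T.card := by
    intro T hT
    have hle := Finset.card_le_card (Finset.mem_powerset.mp hT)
    calc (-1 : K) ^ (V.card - T.card)
        = (-1 : K) ^ (V.card - T.card) * ((-1) ^ T.card * (-1) ^ T.card) := by
          rw [← mul_pow]; norm_num
      _ = (-1 : K) ^ (V.card - T.card + T.card) * (-1) ^ T.card := by
          rw [pow_add]; ring
      _ = _ := by rw [Nat.sub_add_cancel hle]
  rw [Finset.sum_congr rfl hk, ← Finset.mul_sum]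
  have h2 : ∑ T ∈ V.powerset, (-1 : K) ^ T.card = if V = ∅ then 1 else 0 := by
    have h := Finset.sum_powerset_neg_one_pow_card (x := V)
    calc ∑ T ∈ V.powerset, (-1 : K) ^ T.card
        = ((∑ T ∈ V.powerset, (-1 : ℤ) ^ T.card : ℤ) : K) := by push_cast; rfl
      _ = _ := by rw [h]; split <;> simp
  rw [h2]
  split
  · rename_i h; subst h; simp
  · rw [mul_zero]

lemma ie {α : Type} [DecidableEq α] (S H : Finset α) (hH : H ⊆ S) :
    ∑ T ∈ S.powerset, (-1 : K) ^ (S.card - T.card) * (if H ⊆ T then 1 else 0)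
      = if H = S then 1 else 0 := by
  classical
  simp only [mul_ite, mul_one, mul_zero]
  rw [← Finset.sum_filter]
  have keybij : ∑ T ∈ S.powerset.filter (fun T => H ⊆ T), (-1 : K) ^ (S.card - T.card)
      = ∑ T' ∈ (S \ H).powerset, (-1 : K) ^ ((S \ H).card - T'.card) := by
    refine Finset.sum_nbij' (fun T => T \ H) (fun T' => H ∪ T') ?_ ?_ ?_ ?_ ?_
    · intro T hT
      simp only [Finset.mem_filter, Finset.mem_powerset] at hT
      exact Finset.mem_powerset.mpr (Finset.sdiff_subset_sdiff hT.1 (le_refl H))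
    · intro T' hT'
      simp only [Finset.mem_powerset] at hT'
      simp only [Finset.mem_filter, Finset.mem_powerset]
      exact ⟨Finset.union_subset hH (hT'.trans Finset.sdiff_subset), Finset.subset_union_left⟩
    · intro T hT
      simp only [Finset.mem_filter, Finset.mem_powerset] at hT
      exact Finset.union_sdiff_of_subset hT.2
    · intro T' hT'
      simp only [Finset.mem_powerset] at hT'
      exact Finset.union_sdiff_cancel_left
        (Finset.disjoint_of_subset_right hT' Finset.sdiff_disjoint.symm)
    · intro T hT
      simp only [Finset.mem_filter, Finset.mem_powerset] at hT
      have h2 : H ⊆ T := hT.2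
      have hTc : H.card ≤ T.card := Finset.card_le_card h2
      have hSc : T.card ≤ S.card := Finset.card_le_card hT.1
      have hHc : H.card ≤ S.card := Finset.card_le_card hH
      rw [Finset.card_sdiff_of_subset h2, Finset.card_sdiff_of_subset hH]
      congr 1
      omega
  rw [keybij, neg_one_powerset]
  congr 1
  rw [eq_iff_iff, Finset.sdiff_eq_empty_iff_subset]
  constructor
  · intro h; exact le_antisymm hH h
  · intro h; rw [h]

end HGC
namespace HGC

variable {σ : Signature} {K : Type} [Field K] [CharZero K]

/-- The "good" homomorphism pairs: admissible, hitting every interior dot of `G`,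
and surjective on boxes. -/
def Good (F G : DotDiagram σ) (hIn : F.nIn = G.nIn) (hOut : F.nOut = G.nOut)
    (pb : (F.D → G.D) × (F.B → G.B)) : Prop :=
  Adm F G hIn hOut pb.1 pb.2 ∧ (∀ e : G.D, e ∉ bSet G → ∃ d, pb.1 d = e) ∧
    Function.Surjective pb.2

lemma alt_sum (F G : DotDiagram σ) (hIn : F.nIn = G.nIn) (hOut : F.nOut = G.nOut)
    (hlIn : ∀ k, F.ld (F.pin k) = G.ld (G.pin (Fin.cast hIn k)))
    (hlOut : ∀ l, F.ld (F.pout l) = G.ld (G.pout (Fin.cast hOut l))) :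
    (∑ T ∈ (Finset.univ.filter (fun e : G.D => e ∉ bSet G)).powerset,
      ∑ U ∈ (Finset.univ : Finset G.B).powerset,
        ((-1 : K) ^ ((Finset.univ.filter (fun e : G.D => e ∉ bSet G)).card - T.card) *
         (-1 : K) ^ ((Finset.univ : Finset G.B).card - U.card) *
         (Gamma G T U K).valueMatrix F (xc F G hIn hlIn T U K) (yc F G hOut hlOut T U K)))
    = (Fintype.card {pb : (F.D → G.D) × (F.B → G.B) // Good F G hIn hOut pb} : K) := by
  classical
  set SD : Finset G.D := Finset.univ.filter (fun e : G.D => e ∉ bSet G) with hSD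
  set A : (F.D → G.D) × (F.B → G.B) → K :=
    fun pb => if Adm F G hIn hOut pb.1 pb.2 then 1 else 0 with hA
  set HD : (F.D → G.D) × (F.B → G.B) → Finset G.D :=
    fun pb => Finset.univ.filter (fun e : G.D => e ∉ bSet G ∧ ∃ d, pb.1 d = e) with hHD
  set Bf : (F.D → G.D) × (F.B → G.B) → Finset G.D → K :=
    fun pb T => if HD pb ⊆ T then 1 else 0 with hBf
  set Cf : (F.D → G.D) × (F.B → G.B) → Finset G.B → K :=
    fun pb U => if Finset.univ.image pb.2 ⊆ U then 1 else 0 with hCf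
  have step_val : ∀ T U,
      (Gamma G T U K).valueMatrix F (xc F G hIn hlIn T U K) (yc F G hOut hlOut T U K)
        = ∑ pb : (F.D → G.D) × (F.B → G.B), A pb * Bf pb T * Cf pb U := by
    intro T U
    rw [gamma_value F G hIn hOut hlIn hlOut T U]
    refine Finset.sum_congr rfl fun pb _ => ?_
    have hX : (∀ d, pb.1 d ∈ bSet G ∨ pb.1 d ∈ T) ↔ HD pb ⊆ T := by
      constructor
      · intro hx e he
        rw [hHD] at he
        simp only [Finset.mem_filter, Finset.mem_univ, true_and] at he
        obtain ⟨hbe, d, hd⟩ := he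
        rcases hx d with h | h
        · exact absurd (hd ▸ h) hbe
        · exact hd ▸ h
      · intro hs d
        by_cases hb : pb.1 d ∈ bSet G
        · exact Or.inl hb
        · refine Or.inr (hs ?_)
          rw [hHD]
          simp only [Finset.mem_filter, Finset.mem_univ, true_and]
          exact ⟨hb, d, rfl⟩
    have hY : (∀ b, pb.2 b ∈ U) ↔ Finset.univ.image pb.2 ⊆ U := by
      rw [Finset.image_subset_iff]
      exact ⟨fun h b _ => h b, fun h b => h b (Finset.mem_univ b)⟩
    rw [hA, hBf, hCf]
    dsimp only
    by_cases h1 : Adm F G hIn hOut pb.1 pb.2 <;>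
      by_cases h2 : HD pb ⊆ T <;> by_cases h3 : Finset.univ.image pb.2 ⊆ U <;>
      simp [h1, h2, h3, hX, hY]
  calc (∑ T ∈ SD.powerset, ∑ U ∈ (Finset.univ : Finset G.B).powerset,
        ((-1 : K) ^ (SD.card - T.card) * (-1 : K) ^ ((Finset.univ : Finset G.B).card - U.card) *
         (Gamma G T U K).valueMatrix F (xc F G hIn hlIn T U K) (yc F G hOut hlOut T U K)))
      = ∑ T ∈ SD.powerset, ∑ U ∈ (Finset.univ : Finset G.B).powerset,
          ∑ pb : (F.D → G.D) × (F.B → G.B),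
            ((-1 : K) ^ (SD.card - T.card) * (-1 : K) ^ ((Finset.univ : Finset G.B).card - U.card) *
             (A pb * Bf pb T * Cf pb U)) := by
        refine Finset.sum_congr rfl fun T _ => Finset.sum_congr rfl fun U _ => ?_
        rw [step_val T U, Finset.mul_sum]
    _ = ∑ pb : (F.D → G.D) × (F.B → G.B), ∑ T ∈ SD.powerset,
          ∑ U ∈ (Finset.univ : Finset G.B).powerset,
            ((-1 : K) ^ (SD.card - T.card) * (-1 : K) ^ ((Finset.univ : Finset G.B).card - U.card) *
             (A pb * Bf pb T * Cf pb U)) := by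
        refine (Finset.sum_congr rfl fun T _ => Finset.sum_comm).trans ?_
        exact Finset.sum_comm
    _ = ∑ pb : (F.D → G.D) × (F.B → G.B),
          A pb * ((∑ T ∈ SD.powerset, (-1 : K) ^ (SD.card - T.card) * Bf pb T) *
            (∑ U ∈ (Finset.univ : Finset G.B).powerset,
              (-1 : K) ^ ((Finset.univ : Finset G.B).card - U.card) * Cf pb U)) := by
        refine Finset.sum_congr rfl fun pb _ => ?_
        have inner : ∀ T : Finset G.D,
            (∑ U ∈ (Finset.univ : Finset G.B).powerset,
              ((-1 : K) ^ (SD.card - T.card) *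
               (-1 : K) ^ ((Finset.univ : Finset G.B).card - U.card) *
               (A pb * Bf pb T * Cf pb U)))
            = ((-1 : K) ^ (SD.card - T.card) * Bf pb T) *
              (A pb * ∑ U ∈ (Finset.univ : Finset G.B).powerset,
                (-1 : K) ^ ((Finset.univ : Finset G.B).card - U.card) * Cf pb U) := by
          intro T
          calc (∑ U ∈ (Finset.univ : Finset G.B).powerset,
              ((-1 : K) ^ (SD.card - T.card) *
               (-1 : K) ^ ((Finset.univ : Finset G.B).card - U.card) *
               (A pb * Bf pb T * Cf pb U)))
              = ∑ U ∈ (Finset.univ : Finset G.B).powerset,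
                  (((-1 : K) ^ (SD.card - T.card) * Bf pb T * A pb) *
                   ((-1 : K) ^ ((Finset.univ : Finset G.B).card - U.card) * Cf pb U)) :=
                Finset.sum_congr rfl fun U _ => by ring
            _ = ((-1 : K) ^ (SD.card - T.card) * Bf pb T * A pb) *
                  ∑ U ∈ (Finset.univ : Finset G.B).powerset,
                    ((-1 : K) ^ ((Finset.univ : Finset G.B).card - U.card) * Cf pb U) :=
                (Finset.mul_sum _ _ _).symm
            _ = _ := by ring
        calc (∑ T ∈ SD.powerset, ∑ U ∈ (Finset.univ : Finset G.B).powerset,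
            ((-1 : K) ^ (SD.card - T.card) *
             (-1 : K) ^ ((Finset.univ : Finset G.B).card - U.card) *
             (A pb * Bf pb T * Cf pb U)))
            = ∑ T ∈ SD.powerset, (((-1 : K) ^ (SD.card - T.card) * Bf pb T) *
                (A pb * ∑ U ∈ (Finset.univ : Finset G.B).powerset,
                  (-1 : K) ^ ((Finset.univ : Finset G.B).card - U.card) * Cf pb U)) :=
              Finset.sum_congr rfl fun T _ => inner T
          _ = (∑ T ∈ SD.powerset, (-1 : K) ^ (SD.card - T.card) * Bf pb T) *
                (A pb * ∑ U ∈ (Finset.univ : Finset G.B).powerset,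
                  (-1 : K) ^ ((Finset.univ : Finset G.B).card - U.card) * Cf pb U) :=
              (Finset.sum_mul _ _ _).symm
          _ = _ := by ring
    _ = ∑ pb : (F.D → G.D) × (F.B → G.B),
          A pb * ((if HD pb = SD then 1 else 0) *
            (if Finset.univ.image pb.2 = (Finset.univ : Finset G.B) then 1 else 0)) := by
        refine Finset.sum_congr rfl fun pb _ => ?_
        have hsub : HD pb ⊆ SD := by
          rw [hHD, hSD]
          intro e he
          simp only [Finset.mem_filter, Finset.mem_univ, true_and] at he ⊢
          exact he.1
        rw [ie SD (HD pb) hsub,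
          ie (Finset.univ : Finset G.B) (Finset.univ.image pb.2) (Finset.subset_univ _)]
    _ = ∑ pb : (F.D → G.D) × (F.B → G.B), (if Good F G hIn hOut pb then (1 : K) else 0) := by
        refine Finset.sum_congr rfl fun pb _ => ?_
        have hhit : HD pb = SD ↔ (∀ e : G.D, e ∉ bSet G → ∃ d, pb.1 d = e) := by
          constructor
          · intro h e hbe
            have : e ∈ HD pb := by
              rw [h, hSD]; simp only [Finset.mem_filter, Finset.mem_univ, true_and]; exact hbe
            rw [hHD] at this
            simp only [Finset.mem_filter, Finset.mem_univ, true_and] at this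
            exact this.2
          · intro h
            apply Finset.Subset.antisymm
            · intro e he; rw [hHD] at he; rw [hSD]
              simp only [Finset.mem_filter, Finset.mem_univ, true_and] at he ⊢
              exact he.1
            · intro e he; rw [hSD] at he; rw [hHD]
              simp only [Finset.mem_filter, Finset.mem_univ, true_and] at he ⊢
              exact ⟨he, h e he⟩
        have hsurj : Finset.univ.image pb.2 = (Finset.univ : Finset G.B) ↔
            Function.Surjective pb.2 := by
          constructor
          · intro h c
            have : c ∈ Finset.univ.image pb.2 := by rw [h]; exact Finset.mem_univ c
            simp only [Finset.mem_image, Finset.mem_univ, true_and] at this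
            exact this
          · intro h
            apply Finset.eq_univ_iff_forall.mpr
            intro c
            simp only [Finset.mem_image, Finset.mem_univ, true_and]
            exact h c
        rw [hA]
        dsimp only
        by_cases h1 : Adm F G hIn hOut pb.1 pb.2 <;>
          by_cases h2 : HD pb = SD <;>
          by_cases h3 : Finset.univ.image pb.2 = (Finset.univ : Finset G.B) <;>
          simp [h1, h2, h3, Good, hhit.symm, hsurj.symm, hhit.mp, hsurj.mp] <;>
          first
            | (intro hh; exact absurd (hhit.mpr hh.1) h2)
            | skip
    _ = (Fintype.card {pb : (F.D → G.D) × (F.B → G.B) // Good F G hIn hOut pb} : K) := by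
        rw [Finset.sum_boole, Fintype.card_subtype]

end HGC
namespace HGC

variable {σ : Signature} {K : Type} [Field K] [CharZero K]

lemma gamma_sigma_ext (G : DotDiagram σ) (T : Finset G.D) (U : Finset G.B)
    {A B : σ.Obj} (h : A = B) (v : (Gamma G T U K).car A) (w : (Gamma G T U K).car B)
    (hvw : v.1 = w.1) : (⟨A, v⟩ : Σ C : σ.Obj, (Gamma G T U K).car C) = ⟨B, w⟩ := by
  subst h
  exact congrArg _ (Subtype.ext hvw)

lemma xc_cast (F G : DotDiagram σ) (hIn : F.nIn = G.nIn)
    (hlIn : ∀ k, F.ld (F.pin k) = G.ld (G.pin (Fin.cast hIn k)))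
    (T : Finset G.D) (U : Finset G.B) :
    (fun k => xc F G hIn hlIn T U K (Fin.cast hIn.symm k))
      = xc G G rfl (fun _ => rfl) T U K := by
  funext k
  refine gamma_sigma_ext G T U ?_ _ _ ?_
  · rw [hlIn (Fin.cast hIn.symm k)]
    exact congrArg G.ld (congrArg G.pin (Fin.ext rfl))
  · rfl

lemma yc_cast (F G : DotDiagram σ) (hOut : F.nOut = G.nOut)
    (hlOut : ∀ l, F.ld (F.pout l) = G.ld (G.pout (Fin.cast hOut l)))
    (T : Finset G.D) (U : Finset G.B) :
    (fun l => yc F G hOut hlOut T U K (Fin.cast hOut.symm l))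
      = yc G G rfl (fun _ => rfl) T U K := by
  funext l
  refine gamma_sigma_ext G T U ?_ _ _ ?_
  · rw [hlOut (Fin.cast hOut.symm l)]
    exact congrArg G.ld (congrArg G.pout (Fin.ext rfl))
  · rfl

lemma good_id (G : DotDiagram σ) : Good G G rfl rfl (id, id) := by
  refine ⟨⟨fun d => rfl, fun b => ⟨rfl, fun i h1 h2 => rfl, fun j h1 h2 => rfl⟩,
    fun k => rfl, fun l => rfl⟩, fun e _ => ⟨e, rfl⟩, Function.surjective_id⟩

lemma exists_good (F G : DotDiagram σ) (hIn : F.nIn = G.nIn) (hOut : F.nOut = G.nOut)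
    (hlIn : ∀ k, F.ld (F.pin k) = G.ld (G.pin (Fin.cast hIn k)))
    (hlOut : ∀ l, F.ld (F.pout l) = G.ld (G.pout (Fin.cast hOut l)))
    (hyp : ∀ (M : Interp σ K) (x : Fin F.nIn → (Σ A : σ.Obj, M.car A))
        (y : Fin F.nOut → (Σ A : σ.Obj, M.car A)),
        M.valueMatrix F x y =
          M.valueMatrix G (fun k => x (Fin.cast hIn.symm k))
            (fun l => y (Fin.cast hOut.symm l))) :
    ∃ pb : (F.D → G.D) × (F.B → G.B), Good F G hIn hOut pb := by
  have hcount : (Fintype.card {pb : (F.D → G.D) × (F.B → G.B) // Good F G hIn hOut pb} : K)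
      = (Fintype.card {pb : (G.D → G.D) × (G.B → G.B) // Good G G rfl rfl pb} : K) := by
    rw [← alt_sum F G hIn hOut hlIn hlOut, ← alt_sum G G rfl rfl (fun _ => rfl) (fun _ => rfl)]
    refine Finset.sum_congr rfl fun T _ => Finset.sum_congr rfl fun U _ => ?_
    congr 1
    rw [hyp (Gamma G T U K) (xc F G hIn hlIn T U K) (yc F G hOut hlOut T U K),
      xc_cast F G hIn hlIn T U, yc_cast F G hOut hlOut T U]
  have hc : Fintype.card {pb : (F.D → G.D) × (F.B → G.B) // Good F G hIn hOut pb}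
      = Fintype.card {pb : (G.D → G.D) × (G.B → G.B) // Good G G rfl rfl pb} :=
    Nat.cast_inj.mp hcount
  have hpos : 0 < Fintype.card {pb : (G.D → G.D) × (G.B → G.B) // Good G G rfl rfl pb} :=
    Fintype.card_pos_iff.mpr ⟨⟨(id, id), good_id G⟩⟩
  obtain ⟨⟨pb, hpb⟩⟩ := Fintype.card_pos_iff.mp (hc ▸ hpos)
  exact ⟨pb, hpb⟩

end HGC
namespace HGC

variable {σ : Signature} {K : Type} [Field K] [CharZero K]

lemma backward (F G : DotDiagram σ) (hIn : F.nIn = G.nIn) (hOut : F.nOut = G.nOut)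
    (hlIn : ∀ k, F.ld (F.pin k) = G.ld (G.pin (Fin.cast hIn k)))
    (hlOut : ∀ l, F.ld (F.pout l) = G.ld (G.pout (Fin.cast hOut l)))
    (hyp : ∀ (M : Interp σ K) (x : Fin F.nIn → (Σ A : σ.Obj, M.car A))
        (y : Fin F.nOut → (Σ A : σ.Obj, M.car A)),
        M.valueMatrix F x y =
          M.valueMatrix G (fun k => x (Fin.cast hIn.symm k))
            (fun l => y (Fin.cast hOut.symm l))) :
    DotDiagram.Isomorphic F G := by
  obtain ⟨p, hpAdm, hpHit, hpSurj⟩ := exists_good (K := K) F G hIn hOut hlIn hlOut hyp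
  have hlIn' : ∀ k, G.ld (G.pin k) = F.ld (F.pin (Fin.cast hIn.symm k)) := fun k => by
    rw [hlIn (Fin.cast hIn.symm k)]
    exact congrArg G.ld (congrArg G.pin (Fin.ext rfl)).symm
  have hlOut' : ∀ l, G.ld (G.pout l) = F.ld (F.pout (Fin.cast hOut.symm l)) := fun l => by
    rw [hlOut (Fin.cast hOut.symm l)]
    exact congrArg G.ld (congrArg G.pout (Fin.ext rfl)).symm
  have hyp' : ∀ (M : Interp σ K) (x : Fin G.nIn → (Σ A : σ.Obj, M.car A))
      (y : Fin G.nOut → (Σ A : σ.Obj, M.car A)),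
      M.valueMatrix G x y =
        M.valueMatrix F (fun k => x (Fin.cast hIn.symm.symm k))
          (fun l => y (Fin.cast hOut.symm.symm l)) := by
    intro M x y
    have h := hyp M (fun k => x (Fin.cast hIn k)) (fun l => y (Fin.cast hOut l))
    have h2 : (fun k => x (Fin.cast hIn (Fin.cast hIn.symm k))) = x :=
      funext fun k => congrArg x (Fin.ext rfl)
    have h3 : (fun l => y (Fin.cast hOut (Fin.cast hOut.symm l))) = y :=
      funext fun l => congrArg y (Fin.ext rfl)
    rw [h2, h3] at h
    exact h.symm
  obtain ⟨q, hqAdm, hqHit, hqSurj⟩ :=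
    exists_good (K := K) G F hIn.symm hOut.symm hlIn' hlOut' hyp'
  have hpsurjD : Function.Surjective p.1 := by
    intro e
    by_cases hb : e ∈ bSet G
    · rcases hb with ⟨k, hk⟩ | ⟨l, hl⟩
      · refine ⟨F.pin (Fin.cast hIn.symm k), ?_⟩
        rw [hpAdm.2.2.1, ← hk]
        exact congrArg G.pin (Fin.ext rfl)
      · refine ⟨F.pout (Fin.cast hOut.symm l), ?_⟩
        rw [hpAdm.2.2.2, ← hl]
        exact congrArg G.pout (Fin.ext rfl)
    · exact hpHit e hb
  have hqsurjD : Function.Surjective q.1 := by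
    intro e
    by_cases hb : e ∈ bSet F
    · rcases hb with ⟨k, hk⟩ | ⟨l, hl⟩
      · refine ⟨G.pin (Fin.cast hIn k), ?_⟩
        rw [hqAdm.2.2.1, ← hk]
        exact congrArg F.pin (Fin.ext rfl)
      · refine ⟨G.pout (Fin.cast hOut l), ?_⟩
        rw [hqAdm.2.2.2, ← hl]
        exact congrArg F.pout (Fin.ext rfl)
    · exact hqHit e hb
  have hcardD : Fintype.card F.D = Fintype.card G.D :=
    le_antisymm (Fintype.card_le_of_surjective q.1 hqsurjD)
      (Fintype.card_le_of_surjective p.1 hpsurjD)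
  have hcardB : Fintype.card F.B = Fintype.card G.B :=
    le_antisymm (Fintype.card_le_of_surjective q.2 hqSurj)
      (Fintype.card_le_of_surjective p.2 hpSurj)
  have hbijD : Function.Bijective p.1 :=
    (Fintype.bijective_iff_surjective_and_card p.1).mpr ⟨hpsurjD, hcardD⟩
  have hbijB : Function.Bijective p.2 :=
    (Fintype.bijective_iff_surjective_and_card p.2).mpr ⟨hpSurj, hcardB⟩
  refine ⟨⟨p.2, p.1, fun b => (hpAdm.2.1 b).1, hpAdm.1, fun b i => ?_, fun b j => ?_,
    hIn, hOut, fun k => hpAdm.2.2.1 k, fun l => hpAdm.2.2.2 l⟩, hbijB, hbijD⟩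
  · exact ((hpAdm.2.1 b).2.1 i.1 i.2 (by rw [(hpAdm.2.1 b).1]; exact i.2)).symm
  · exact ((hpAdm.2.1 b).2.2 j.1 j.2 (by rw [(hpAdm.2.1 b).1]; exact j.2)).symm

end HGC
namespace HGC

variable {σ : Signature} {K : Type} [Field K] [CharZero K]

lemma sigma_cast (M : Interp σ K) {A B : σ.Obj} (h : A = B) (v : M.car A) :
    (⟨B, cast (congrArg M.car h) v⟩ : Σ C : σ.Obj, M.car C) = ⟨A, v⟩ := by subst h; rfl

lemma cast_apply {α : Type} (W : α → Type) (f : ∀ a, W a) {a b : α} (h : a = b)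
    (hW : W a = W b) : cast hW (f a) = f b := by subst h; rfl

lemma val_congr (M : Interp σ K) {f f' : σ.Mor} (h : f = f')
    {xs : (i : Fin (σ.dom f).length) → M.car ((σ.dom f).get i)}
    {ys : (j : Fin (σ.cod f).length) → M.car ((σ.cod f).get j)}
    {xs' : (i : Fin (σ.dom f').length) → M.car ((σ.dom f').get i)}
    {ys' : (j : Fin (σ.cod f').length) → M.car ((σ.cod f').get j)}
    (hx : ∀ (i : ℕ) (hi : i < (σ.dom f).length) (hi' : i < (σ.dom f').length),
      HEq (xs ⟨i, hi⟩) (xs' ⟨i, hi'⟩))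
    (hy : ∀ (j : ℕ) (hj : j < (σ.cod f).length) (hj' : j < (σ.cod f').length),
      HEq (ys ⟨j, hj⟩) (ys' ⟨j, hj'⟩)) :
    M.val f xs ys = M.val f' xs' ys' := by
  subst h
  have h1 : xs = xs' := funext fun i => eq_of_heq (hx i.1 i.2 i.2)
  have h2 : ys = ys' := funext fun j => eq_of_heq (hy j.1 j.2 j.2)
  rw [h1, h2]

lemma forward (F G : DotDiagram σ) (hIn : F.nIn = G.nIn) (hOut : F.nOut = G.nOut)
    (Φ : DotDiagram.Hom F G) (hB : Function.Bijective Φ.onB)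
    (hD : Function.Bijective Φ.onD) (M : Interp σ K)
    (x : Fin F.nIn → (Σ A : σ.Obj, M.car A))
    (y : Fin F.nOut → (Σ A : σ.Obj, M.car A)) :
    M.valueMatrix F x y =
      M.valueMatrix G (fun k => x (Fin.cast hIn.symm k))
        (fun l => y (Fin.cast hOut.symm l)) := by
  classical
  set eD : F.D ≃ G.D := Equiv.ofBijective Φ.onD hD with heD
  set Tmap : ((dG : G.D) → M.car (G.ld dG)) → ((dF : F.D) → M.car (F.ld dF)) :=
    fun φ d => cast (congrArg M.car (Φ.map_ld d)) (φ (Φ.onD d)) with hTmap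
  have hTbij : Function.Bijective Tmap := by
    rw [Function.bijective_iff_has_inverse]
    refine ⟨fun φ dG => cast (congrArg M.car
      ((Φ.map_ld (eD.symm dG)).symm.trans (congrArg G.ld (eD.apply_symm_apply dG))))
      (φ (eD.symm dG)), fun φ => funext fun dG => ?_, fun φ => funext fun dF => ?_⟩
    · show cast _ (cast _ (φ (Φ.onD (eD.symm dG)))) = φ dG
      rw [cast_cast]
      exact cast_apply (fun dG => M.car (G.ld dG)) φ (eD.apply_symm_apply dG) _
    · show cast _ (cast _ (φ (eD.symm (Φ.onD dF)))) = φ dF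
      rw [cast_cast]
      exact cast_apply (fun dF => M.car (F.ld dF)) φ (eD.symm_apply_apply dF) _
  refine (Fintype.sum_bijective Tmap hTbij _ _ fun φ => ?_).symm
  have hkeyIn : ∀ k : Fin F.nIn,
      (⟨F.ld (F.pin k), Tmap φ (F.pin k)⟩ : Σ A : σ.Obj, M.car A)
        = ⟨G.ld (G.pin (Fin.cast hIn k)), φ (G.pin (Fin.cast hIn k))⟩ := by
    intro k
    have h1 : (⟨F.ld (F.pin k), Tmap φ (F.pin k)⟩ : Σ A : σ.Obj, M.car A)
        = ⟨G.ld (Φ.onD (F.pin k)), φ (Φ.onD (F.pin k))⟩ :=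
      sigma_cast M (Φ.map_ld (F.pin k)) (φ (Φ.onD (F.pin k)))
    refine h1.trans ?_
    exact congrArg (fun dG => (⟨G.ld dG, φ dG⟩ : Σ A : σ.Obj, M.car A)) (Φ.map_pin k)
  have hkeyOut : ∀ l : Fin F.nOut,
      (⟨F.ld (F.pout l), Tmap φ (F.pout l)⟩ : Σ A : σ.Obj, M.car A)
        = ⟨G.ld (G.pout (Fin.cast hOut l)), φ (G.pout (Fin.cast hOut l))⟩ := by
    intro l
    have h1 : (⟨F.ld (F.pout l), Tmap φ (F.pout l)⟩ : Σ A : σ.Obj, M.car A)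
        = ⟨G.ld (Φ.onD (F.pout l)), φ (Φ.onD (F.pout l))⟩ :=
      sigma_cast M (Φ.map_ld (F.pout l)) (φ (Φ.onD (F.pout l)))
    refine h1.trans ?_
    exact congrArg (fun dG => (⟨G.ld dG, φ dG⟩ : Σ A : σ.Obj, M.car A)) (Φ.map_pout l)
  have hin_iff : (∀ k, (⟨G.ld (G.pin k), φ (G.pin k)⟩ : Σ A : σ.Obj, M.car A)
        = x (Fin.cast hIn.symm k))
      ↔ (∀ k, (⟨F.ld (F.pin k), Tmap φ (F.pin k)⟩ : Σ A : σ.Obj, M.car A) = x k) := by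
    constructor
    · intro h k
      rw [hkeyIn k]
      have h1 := h (Fin.cast hIn k)
      rwa [show Fin.cast hIn.symm (Fin.cast hIn k) = k from Fin.ext rfl] at h1
    · intro h k'
      have h1 := h (Fin.cast hIn.symm k')
      rw [hkeyIn (Fin.cast hIn.symm k')] at h1
      rwa [show Fin.cast hIn (Fin.cast hIn.symm k') = k' from Fin.ext rfl] at h1
  have hout_iff : (∀ l, (⟨G.ld (G.pout l), φ (G.pout l)⟩ : Σ A : σ.Obj, M.car A)
        = y (Fin.cast hOut.symm l))
      ↔ (∀ l, (⟨F.ld (F.pout l), Tmap φ (F.pout l)⟩ : Σ A : σ.Obj, M.car A) = y l) := by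
    constructor
    · intro h l
      rw [hkeyOut l]
      have h1 := h (Fin.cast hOut l)
      rwa [show Fin.cast hOut.symm (Fin.cast hOut l) = l from Fin.ext rfl] at h1
    · intro h l'
      have h1 := h (Fin.cast hOut.symm l')
      rw [hkeyOut (Fin.cast hOut.symm l')] at h1
      rwa [show Fin.cast hOut (Fin.cast hOut.symm l') = l' from Fin.ext rfl] at h1
  have hprod : ∏ b : G.B, M.boxEntry G φ b = ∏ b : F.B, M.boxEntry F (Tmap φ) b := by
    refine (Fintype.prod_bijective Φ.onB hB _ _ fun b => ?_).symm
    show M.boxEntry F (Tmap φ) b = M.boxEntry G φ (Φ.onB b)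
    refine val_congr M (Φ.map_lb b).symm ?_ ?_
    · intro i hi hi'
      have harg : Φ.onD (F.win b ⟨i, hi⟩) = G.win (Φ.onB b) ⟨i, hi'⟩ :=
        (Φ.map_win b ⟨i, hi⟩).symm
      have hmid : HEq (φ (Φ.onD (F.win b ⟨i, hi⟩))) (φ (G.win (Φ.onB b) ⟨i, hi'⟩)) := by
        rw [harg]
      exact ((cast_heq _ _).trans (cast_heq _ _)).trans (hmid.trans (cast_heq _ _).symm)
    · intro j hj hj'
      have harg : Φ.onD (F.wout b ⟨j, hj⟩) = G.wout (Φ.onB b) ⟨j, hj'⟩ :=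
        (Φ.map_wout b ⟨j, hj⟩).symm
      have hmid : HEq (φ (Φ.onD (F.wout b ⟨j, hj⟩))) (φ (G.wout (Φ.onB b) ⟨j, hj'⟩)) := by
        rw [harg]
      exact ((cast_heq _ _).trans (cast_heq _ _)).trans (hmid.trans (cast_heq _ _).symm)
  refine if_congr ?_ hprod rfl
  rw [hin_iff, hout_iff]

end HGC

/-- The full completeness theorem for hypergraph categories: over a field `K` of
characteristic `0`, two dot-diagrams with the same input list and the same output list
are isomorphic iff their value matrices agree under every interpretation of the
signature over `K`. -/
theorem DotDiagram.completeness {σ : Signature}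
    (K : Type) [Field K] [CharZero K] (F G : DotDiagram σ)
    (hIn : F.nIn = G.nIn) (hOut : F.nOut = G.nOut)
    (hlIn : ∀ k, F.ld (F.pin k) = G.ld (G.pin (Fin.cast hIn k)))
    (hlOut : ∀ l, F.ld (F.pout l) = G.ld (G.pout (Fin.cast hOut l))) :
    DotDiagram.Isomorphic F G ↔
      ∀ (M : Interp σ K) (x : Fin F.nIn → (Σ A : σ.Obj, M.car A))
        (y : Fin F.nOut → (Σ A : σ.Obj, M.car A)),
        M.valueMatrix F x y =
          M.valueMatrix G (fun k => x (Fin.cast hIn.symm k))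
            (fun l => y (Fin.cast hOut.symm l)) := by
  constructor
  · rintro ⟨Φ, hB, hD⟩ M x y
    exact HGC.forward F G hIn hOut Φ hB hD M x y
  · intro hyp
    exact HGC.backward F G hIn hOut hlIn hlOut hyp
end
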